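/- arXiv:1003.5786 — 10 statements merged into one kernel-verified Lean document; each statement's English description precedes it below -/
import Mathlib

section
/- If φ : S¹ → Γ is an H-weak-quasisymmetric homeomorphism from the unit circle (with arc-length metric) onto a metric Jordan curve Γ, then Γ is C-bounded turning with C = min{2H, H²}. -/
open Metric Set

noncomputable section

abbrev S1 := AddCircle (1 : ℝ)

/-- The closed arc on the unit circle from `x` counterclockwise to `y`. -/
def arcCCW (x y : S1) : Set S1 :=
  (fun t : ℝ => x + (t : S1)) '' Set.Icc 0 ((AddCircle.equivIco 1 0 (y - x) : ℝ))

/-- The diameter distance on a Jordan curve `Γ` parametrized by `e : S1 ≃ₜ Γ`: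
the diameter of the subarc of smaller diameter between `x` and `y`. -/
def ddist {Γ : Type*} [MetricSpace Γ] (e : S1 ≃ₜ Γ) (x y : Γ) : ℝ :=
  min (diam (e '' arcCCW (e.symm x) (e.symm y))) (diam (e '' arcCCW (e.symm y) (e.symm x)))

/-- `f` is an `H`-weak-quasisymmetry. -/
def IsWeakQS {X Y : Type*} [MetricSpace X] [MetricSpace Y] (f : X → Y) (H : ℝ) : Prop :=
  ∀ x y z : X, dist x y ≤ dist x z → dist (f x) (f y) ≤ H * dist (f x) (f z)

/-! Let `a, b ∈ S¹` be the preimages of `x, y` and take the shorter of the two arcs between them,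
of length at most `1/2`, on which the circle metric is the metric of a segment. Every point `p` of
it is at most as far from `a` (and from `b`) as `b` is from `a`, so `|φp - φa| ≤ H |φa - φb|`, and
the triangle inequality through `φa` bounds the arc's image by `2H |x - y|`. For two points `p, q`
of the arc, `q` is no farther from `p` than one of the endpoints, so applying weak quasisymmetry
at `p` and then at that endpoint gives the bound `H² |x - y|`. -/

/-- The features of a segment `[a, b]` of the line that the weak-quasisymmetry estimates use. -/
structure Metric.IsSegmentLike {X : Type*} [MetricSpace X] (A : Set X) (a b : X) : Prop where
  dist_left_le : ∀ p ∈ A, dist a p ≤ dist a b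
  dist_right_le : ∀ p ∈ A, dist b p ≤ dist a b
  dist_le_or_dist_le : ∀ p ∈ A, ∀ q ∈ A, dist p q ≤ dist p a ∨ dist p q ≤ dist p b

namespace IsWeakQS

variable {X Y : Type*} [MetricSpace X] [MetricSpace Y] {f : X → Y} {H : ℝ}

theorem dist_le_two_mul (hf : IsWeakQS f H) {a b p q : X}
    (hp : dist a p ≤ dist a b) (hq : dist a q ≤ dist a b) :
    dist (f p) (f q) ≤ 2 * H * dist (f a) (f b) :=
  calc dist (f p) (f q) ≤ dist (f a) (f p) + dist (f a) (f q) := dist_triangle_left _ _ _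
    _ ≤ H * dist (f a) (f b) + H * dist (f a) (f b) := add_le_add (hf a p b hp) (hf a q b hq)
    _ = 2 * H * dist (f a) (f b) := by ring

theorem dist_le_sq_mul (hf : IsWeakQS f H) (hH : 0 ≤ H) {a b p q : X}
    (hpa : dist a p ≤ dist a b) (hpb : dist b p ≤ dist a b)
    (hpq : dist p q ≤ dist p a ∨ dist p q ≤ dist p b) :
    dist (f p) (f q) ≤ H ^ 2 * dist (f a) (f b) := by
  have hfpa : dist (f p) (f a) ≤ H * dist (f a) (f b) := by
    rw [dist_comm]
    exact hf a p b hpa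
  have hfpb : dist (f p) (f b) ≤ H * dist (f a) (f b) := by
    rw [dist_comm, dist_comm (f a)]
    exact hf b p a (by rwa [dist_comm b a])
  rcases hpq with hpq | hpq
  · calc dist (f p) (f q) ≤ H * dist (f p) (f a) := hf p q a hpq
      _ ≤ H * (H * dist (f a) (f b)) := mul_le_mul_of_nonneg_left hfpa hH
      _ = H ^ 2 * dist (f a) (f b) := by ring
  · calc dist (f p) (f q) ≤ H * dist (f p) (f b) := hf p q b hpq
      _ ≤ H * (H * dist (f a) (f b)) := mul_le_mul_of_nonneg_left hfpb hH
      _ = H ^ 2 * dist (f a) (f b) := by ring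

theorem diam_image_le (hf : IsWeakQS f H) (hH : 0 ≤ H) {a b : X} {A : Set X}
    (hA : IsSegmentLike A a b) : diam (f '' A) ≤ min (2 * H) (H ^ 2) * dist (f a) (f b) := by
  refine diam_le_of_forall_dist_le (by positivity) ?_
  rintro - ⟨p, hp, rfl⟩ - ⟨q, hq, rfl⟩
  rw [min_mul_of_nonneg _ _ dist_nonneg]
  exact le_min (hf.dist_le_two_mul (hA.dist_left_le p hp) (hA.dist_left_le q hq))
    (hf.dist_le_sq_mul hH (hA.dist_left_le p hp) (hA.dist_right_le p hp)
      (hA.dist_le_or_dist_le p hp q hq))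

end IsWeakQS

namespace S1

theorem dist_add_coe_add_coe (a : S1) {s t : ℝ} (h : |s - t| ≤ 1 / 2) :
    dist (a + (s : S1)) (a + t) = |s - t| := by
  rw [dist_add_left, dist_eq_norm, ← AddCircle.coe_sub]
  exact (AddCircle.norm_coe_eq_abs_iff 1 one_ne_zero).mpr (by simpa using h)

theorem isSegmentLike_image_Icc (a : S1) {L : ℝ} (hL : L ≤ 1 / 2) :
    IsSegmentLike ((fun t : ℝ => a + (t : S1)) '' Icc 0 L) a (a + (L : S1)) := by
  have hdist : ∀ s ∈ Icc 0 L, ∀ t ∈ Icc 0 L, dist (a + (s : S1)) (a + t) = |s - t| :=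
    fun s hs t ht => dist_add_coe_add_coe a (abs_sub_le_iff.mpr
      ⟨by linarith [hs.2, ht.1], by linarith [hs.1, ht.2]⟩)
  have hdist₀ : ∀ s ∈ Icc 0 L, dist a (a + (s : S1)) = s := fun s hs => by
    have h0 : (0 : ℝ) ∈ Icc 0 L := ⟨le_rfl, hs.1.trans hs.2⟩
    simpa [abs_of_nonneg hs.1] using hdist 0 h0 s hs
  constructor
  all_goals
    rintro - ⟨s, hs, rfl⟩
    have hL : L ∈ Icc 0 L := ⟨hs.1.trans hs.2, le_rfl⟩
  · rw [hdist₀ s hs, hdist₀ L hL]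
    exact hs.2
  · rw [hdist L hL s hs, hdist₀ L hL, abs_of_nonneg (sub_nonneg.2 hs.2)]
    linarith [hs.1]
  · rintro - ⟨t, ht, rfl⟩
    rw [hdist s hs t ht, dist_comm _ a, hdist₀ s hs, hdist s hs L hL]
    rcases le_total s t with hst | hst
    · right
      rw [abs_sub_comm, abs_of_nonneg (sub_nonneg.2 hst), abs_sub_comm,
        abs_of_nonneg (sub_nonneg.2 hs.2)]
      linarith [ht.2]
    · left
      rw [abs_of_nonneg (sub_nonneg.2 hst)]
      linarith [ht.1]

def ccwLength (x y : S1) : ℝ := AddCircle.equivIco 1 0 (y - x)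

theorem arcCCW_eq_image (x y : S1) :
    arcCCW x y = (fun t : ℝ => x + (t : S1)) '' Icc 0 (ccwLength x y) := rfl

theorem add_ccwLength (x y : S1) : x + (ccwLength x y : S1) = y := by
  simp [ccwLength]

theorem ccwLength_le_half_or (x y : S1) : ccwLength x y ≤ 1 / 2 ∨ ccwLength y x ≤ 1 / 2 := by
  have hmem : ccwLength x y ∈ Ico 0 (0 + 1) := (AddCircle.equivIco 1 0 (y - x)).2
  rcases le_or_gt (ccwLength x y) (1 / 2) with h | h
  · exact .inl h
  · have hcoe : ((1 - ccwLength x y : ℝ) : S1) = x - y := by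
      rw [AddCircle.coe_sub, AddCircle.coe_period, ccwLength, AddCircle.coe_equivIco]
      abel
    have hmem' : 1 - ccwLength x y ∈ Ico 0 (0 + 1) := ⟨by linarith [hmem.2], by linarith⟩
    right
    rw [ccwLength, ← hcoe, AddCircle.equivIco_coe_of_mem hmem']
    linarith

end S1

theorem IsWeakQS.diam_image_arcCCW_le {Γ : Type*} [MetricSpace Γ] {φ : S1 → Γ} {H : ℝ}
    (hφ : IsWeakQS φ H) (hH : 0 ≤ H) {x y : S1} (h : S1.ccwLength x y ≤ 1 / 2) :
    diam (φ '' arcCCW x y) ≤ min (2 * H) (H ^ 2) * dist (φ x) (φ y) := by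
  simpa only [S1.arcCCW_eq_image, S1.add_ccwLength] using
    hφ.diam_image_le hH (S1.isSegmentLike_image_Icc x h)

/-- If `φ : S¹ → Γ` is an `H`-weak-quasisymmetric homeomorphism onto a metric Jordan
curve `Γ`, then `Γ` is `C`-bounded turning with `C = min {2H, H²}`. -/
theorem weakQS_param_implies_boundedTurning
    {Γ : Type*} [MetricSpace Γ] (φ : S1 ≃ₜ Γ) (H : ℝ) (hH : 1 ≤ H)
    (hφ : IsWeakQS φ H) :
    ∀ x y : Γ, ddist φ x y ≤ min (2 * H) (H ^ 2) * dist x y := by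
  intro x y
  rcases S1.ccwLength_le_half_or (φ.symm x) (φ.symm y) with h | h
  · refine (min_le_left _ _).trans ?_
    simpa using hφ.diam_image_arcCCW_le (by linarith) h
  · refine (min_le_right _ _).trans ?_
    simpa [dist_comm x] using hφ.diam_image_arcCCW_le (by linarith) h
end
end

section
/- For any metric Jordan curve Γ, the diameter distance dd(x,y) := diam Γ[x,y], where Γ[x,y] is the subarc of smaller diameter between x and y, defines a metric on Γ. -/
/-!
Only the triangle inequality needs an argument. If `α` is one of the two arcs between `x` and
`y` and `β` one of the two arcs between `y` and `z`, then `α ∪ β` contains one of the two arcs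
between `x` and `z`; since `α` and `β` share the point `y`, `diam (α ∪ β) ≤ diam α + diam β`.
Positivity holds because an arc contains its endpoints.

Arcs are handled through the counterclockwise length `ccwLength a z ∈ [0, 1)` from `a` to `z`:
`z ∈ arcCCW a b ↔ ccwLength a z ≤ ccwLength a b`, and `ccwLength` is additive modulo `1`.
-/

open Metric Set

noncomputable section

def ccwLength (a z : S1) : ℝ := (AddCircle.equivIco 1 0 (z - a) : ℝ)

lemma ccwLength_mem_Ico (a z : S1) : ccwLength a z ∈ Ico 0 1 := by
  simpa [ccwLength] using (AddCircle.equivIco 1 0 (z - a)).2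

lemma ccwLength_nonneg (a z : S1) : 0 ≤ ccwLength a z := (ccwLength_mem_Ico a z).1

lemma ccwLength_lt_one (a z : S1) : ccwLength a z < 1 := (ccwLength_mem_Ico a z).2

lemma coe_ccwLength (a z : S1) : (ccwLength a z : S1) = z - a := AddCircle.coe_equivIco

lemma add_ccwLength (a z : S1) : a + (ccwLength a z : S1) = z := by
  rw [coe_ccwLength, add_sub_cancel]

lemma ccwLength_add_coe (a : S1) {u : ℝ} (hu : u ∈ Ico 0 1) : ccwLength a (a + u) = u := by
  rw [ccwLength, add_sub_cancel_left, AddCircle.equivIco_coe_of_mem (by simpa using hu)]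

lemma ccwLength_self (a : S1) : ccwLength a a = 0 := by
  simpa using ccwLength_add_coe a (u := 0) (by simp)

lemma ccwLength_add_ccwLength (a b c : S1) :
    ccwLength a b + ccwLength b c = ccwLength a c ∨
      ccwLength a b + ccwLength b c = ccwLength a c + 1 := by
  have hzero : ((ccwLength a b + ccwLength b c - ccwLength a c : ℝ) : S1) = 0 := by
    rw [AddCircle.coe_sub, AddCircle.coe_add, coe_ccwLength, coe_ccwLength, coe_ccwLength]
    abel
  obtain ⟨n, hn⟩ := (AddCircle.coe_eq_zero_iff (1 : ℝ)).1 hzero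
  rw [zsmul_eq_mul, mul_one] at hn
  have hlow : (-1 : ℝ) < n := by
    linarith [ccwLength_nonneg a b, ccwLength_nonneg b c, ccwLength_lt_one a c]
  have hhigh : (n : ℝ) < 2 := by
    linarith [ccwLength_lt_one a b, ccwLength_lt_one b c, ccwLength_nonneg a c]
  have : n = 0 ∨ n = 1 := by
    have : (-1 : ℤ) < n := by exact_mod_cast hlow
    have : n < 2 := by exact_mod_cast hhigh
    omega
  rcases this with rfl | rfl
  · left; push_cast at hn; linarith
  · right; push_cast at hn; linarith

lemma mem_arcCCW_iff {a b z : S1} : z ∈ arcCCW a b ↔ ccwLength a z ≤ ccwLength a b := by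
  constructor
  · rintro ⟨u, hu, rfl⟩
    rw [ccwLength_add_coe a ⟨hu.1, hu.2.trans_lt (ccwLength_lt_one a b)⟩]
    exact hu.2
  · exact fun h => ⟨ccwLength a z, ⟨ccwLength_nonneg a z, h⟩, add_ccwLength a z⟩

lemma left_mem_arcCCW (a b : S1) : a ∈ arcCCW a b :=
  mem_arcCCW_iff.2 (by simpa [ccwLength_self] using ccwLength_nonneg a b)

lemma right_mem_arcCCW (a b : S1) : b ∈ arcCCW a b := mem_arcCCW_iff.2 le_rfl

lemma arcCCW_self (a : S1) : arcCCW a a = {a} := by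
  ext z
  rw [mem_arcCCW_iff, ccwLength_self, mem_singleton_iff]
  constructor
  · intro h
    rw [← add_ccwLength a z, le_antisymm h (ccwLength_nonneg a z)]
    simp
  · rintro rfl
    rw [ccwLength_self]

lemma isCompact_arcCCW (a b : S1) : IsCompact (arcCCW a b) :=
  isCompact_Icc.image (continuous_const.add (AddCircle.continuous_mk' 1))

lemma arcCCW_subset_union (a b c : S1) : arcCCW a c ⊆ arcCCW a b ∪ arcCCW b c := by
  intro z hz
  rw [mem_arcCCW_iff] at hz
  rw [mem_union, mem_arcCCW_iff, mem_arcCCW_iff, or_iff_not_imp_left, not_le]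
  intro hbz
  rcases ccwLength_add_ccwLength a b z with h | h <;>
  rcases ccwLength_add_ccwLength a b c with h' | h' <;>
  linarith [ccwLength_lt_one b z]

lemma arcCCW_initial_subset {a b c : S1} (h : c ∈ arcCCW a b) : arcCCW a c ⊆ arcCCW a b :=
  fun _ hz => mem_arcCCW_iff.2 ((mem_arcCCW_iff.1 hz).trans (mem_arcCCW_iff.1 h))

lemma arcCCW_final_subset {a b c : S1} (h : c ∈ arcCCW a b) : arcCCW c b ⊆ arcCCW a b := by
  intro z hz
  rw [mem_arcCCW_iff] at h hz ⊢
  rcases ccwLength_add_ccwLength a c b with h₁ | h₁ <;>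
  rcases ccwLength_add_ccwLength a c z with h₂ | h₂ <;>
  linarith [ccwLength_lt_one c b, ccwLength_nonneg a z]

lemma mem_arcCCW_or_mem_arcCCW (a b c : S1) : c ∈ arcCCW a b ∨ a ∈ arcCCW c b := by
  rw [mem_arcCCW_iff, mem_arcCCW_iff, or_iff_not_imp_left, not_le]
  intro hac
  rcases ccwLength_add_ccwLength a c b with h₁ | h₁ <;>
  rcases ccwLength_add_ccwLength c a b with h₂ | h₂ <;>
  linarith [ccwLength_nonneg a b, ccwLength_nonneg c b, ccwLength_lt_one a c,
    ccwLength_lt_one c a]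

def arcsBetween (a b : S1) : Set (Set S1) := {arcCCW a b, arcCCW b a}

lemma arcsBetween_comm (a b : S1) : arcsBetween a b = arcsBetween b a := pair_comm _ _

lemma isCompact_of_mem_arcsBetween {a b : S1} {α : Set S1} (hα : α ∈ arcsBetween a b) :
    IsCompact α := by
  rcases hα with rfl | rfl <;> exact isCompact_arcCCW _ _

lemma left_mem_of_mem_arcsBetween {a b : S1} {α : Set S1} (hα : α ∈ arcsBetween a b) :
    a ∈ α := by
  rcases hα with rfl | rfl
  exacts [left_mem_arcCCW a b, right_mem_arcCCW b a]

lemma right_mem_of_mem_arcsBetween {a b : S1} {α : Set S1} (hα : α ∈ arcsBetween a b) :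
    b ∈ α :=
  left_mem_of_mem_arcsBetween (arcsBetween_comm a b ▸ hα)

lemma exists_mem_arcsBetween_subset_union {a b c : S1} {α β : Set S1}
    (hα : α ∈ arcsBetween a b) (hβ : β ∈ arcsBetween b c) :
    ∃ γ ∈ arcsBetween a c, γ ⊆ α ∪ β := by
  rcases hα with rfl | rfl <;> rcases hβ with rfl | rfl
  · exact ⟨_, .inl rfl, arcCCW_subset_union a b c⟩
  · rcases mem_arcCCW_or_mem_arcCCW a b c with h | h
    · exact ⟨_, .inl rfl, (arcCCW_initial_subset h).trans subset_union_left⟩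
    · exact ⟨_, .inr rfl, (arcCCW_initial_subset h).trans subset_union_right⟩
  · rcases le_total (ccwLength b a) (ccwLength b c) with h | h
    · exact ⟨_, .inl rfl, (arcCCW_final_subset (mem_arcCCW_iff.2 h)).trans subset_union_right⟩
    · exact ⟨_, .inr rfl, (arcCCW_final_subset (mem_arcCCW_iff.2 h)).trans subset_union_left⟩
  · exact ⟨_, .inr rfl, (arcCCW_subset_union c b a).trans (union_comm _ _).subset⟩

section

variable {Γ : Type*} [MetricSpace Γ] (e : S1 ≃ₜ Γ)

lemma ddist_le_diam_image {x y : Γ} {γ : Set S1}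
    (hγ : γ ∈ arcsBetween (e.symm x) (e.symm y)) : ddist e x y ≤ diam (e '' γ) := by
  rcases hγ with rfl | rfl
  exacts [min_le_left _ _, min_le_right _ _]

lemma exists_mem_arcsBetween_ddist_eq (x y : Γ) :
    ∃ γ ∈ arcsBetween (e.symm x) (e.symm y), ddist e x y = diam (e '' γ) := by
  rcases min_choice (diam (e '' arcCCW (e.symm x) (e.symm y)))
    (diam (e '' arcCCW (e.symm y) (e.symm x))) with h | h
  exacts [⟨_, .inl rfl, h⟩, ⟨_, .inr rfl, h⟩]

lemma ddist_self (x : Γ) : ddist e x x = 0 := by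
  simp [ddist, arcCCW_self]

lemma dist_le_ddist (x y : Γ) : dist x y ≤ ddist e x y := by
  obtain ⟨γ, hγ, h⟩ := exists_mem_arcsBetween_ddist_eq e x y
  rw [h, ← e.apply_symm_apply x, ← e.apply_symm_apply y]
  exact dist_le_diam_of_mem ((isCompact_of_mem_arcsBetween hγ).image e.continuous).isBounded
    (mem_image_of_mem e (left_mem_of_mem_arcsBetween hγ))
    (mem_image_of_mem e (right_mem_of_mem_arcsBetween hγ))

lemma ddist_comm (x y : Γ) : ddist e x y = ddist e y x := min_comm _ _

lemma ddist_triangle (x y z : Γ) : ddist e x z ≤ ddist e x y + ddist e y z := by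
  obtain ⟨α, hα, hxy⟩ := exists_mem_arcsBetween_ddist_eq e x y
  obtain ⟨β, hβ, hyz⟩ := exists_mem_arcsBetween_ddist_eq e y z
  obtain ⟨γ, hγ, hγαβ⟩ := exists_mem_arcsBetween_subset_union hα hβ
  have hbdd : Bornology.IsBounded (e '' α ∪ e '' β) :=
    (((isCompact_of_mem_arcsBetween hα).image e.continuous).union
      ((isCompact_of_mem_arcsBetween hβ).image e.continuous)).isBounded
  calc ddist e x z ≤ diam (e '' γ) := ddist_le_diam_image e hγ
    _ ≤ diam (e '' α ∪ e '' β) :=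
      diam_mono ((image_mono hγαβ).trans (image_union e α β).le) hbdd
    _ ≤ diam (e '' α) + diam (e '' β) :=
      diam_union' ⟨e (e.symm y), mem_image_of_mem e (right_mem_of_mem_arcsBetween hα),
        mem_image_of_mem e (left_mem_of_mem_arcsBetween hβ)⟩
    _ = ddist e x y + ddist e y z := by rw [hxy, hyz]

end

/-- The diameter distance `dd` is a metric on a metric Jordan curve `Γ`. -/
theorem ddist_is_metric {Γ : Type*} [MetricSpace Γ] (e : S1 ≃ₜ Γ) :
    (∀ x : Γ, ddist e x x = 0) ∧
    (∀ x y : Γ, x ≠ y → 0 < ddist e x y) ∧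
    (∀ x y : Γ, ddist e x y = ddist e y x) ∧
    (∀ x y z : Γ, ddist e x z ≤ ddist e x y + ddist e y z) :=
  ⟨ddist_self e, fun x y hxy => (dist_pos.2 hxy).trans_le (dist_le_ddist e x y), ddist_comm e,
    ddist_triangle e⟩
end
end

section
/- For any metric Jordan curve Γ, the metric space (Γ, dd), where dd is the diameter distance, is 1-bounded turning; that is, for all x, y ∈ Γ, the subarc of smaller dd-diameter between x and y has dd-diameter equal to dd(x,y). -/
open Metric Set

noncomputable section

lemma coe_equivIco (z : S1) : (((AddCircle.equivIco 1 0 z : ℝ)) : S1) = z :=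
  (AddCircle.equivIco 1 0).symm_apply_apply z

lemma equivIco_mem (z : S1) : ((AddCircle.equivIco 1 0 z : ℝ)) ∈ Set.Ico (0:ℝ) 1 := by
  have := (AddCircle.equivIco 1 0 z).2
  simpa using this

lemma equivIco_coe {r : ℝ} (h : r ∈ Set.Ico (0:ℝ) 1) :
    ((AddCircle.equivIco 1 0 (r : S1) : ℝ)) = r := by
  have h' : r ∈ Set.Ico (0:ℝ) (0+1) := by simpa using h
  show ((QuotientAddGroup.equivIcoMod (by norm_num : (0:ℝ)<1) 0 (r : S1) : ℝ)) = r
  rw [QuotientAddGroup.equivIcoMod_coe]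
  exact (toIcoMod_eq_self _).mpr h'

lemma mem_arc_left (x y : S1) : x ∈ arcCCW x y := by
  refine ⟨0, ⟨le_refl _, (equivIco_mem _).1⟩, by simp⟩

lemma mem_arc_right (x y : S1) : y ∈ arcCCW x y := by
  refine ⟨_, ⟨(equivIco_mem (y - x)).1, le_refl _⟩, ?_⟩
  simp [coe_equivIco]

lemma arc_subset (x y : S1) {s t : ℝ}
    (hs : s ∈ Set.Icc 0 ((AddCircle.equivIco 1 0 (y - x) : ℝ)))
    (ht : t ∈ Set.Icc 0 ((AddCircle.equivIco 1 0 (y - x) : ℝ))) (hst : s ≤ t) :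
    arcCCW (x + (s : S1)) (x + (t : S1)) ⊆ arcCCW x y := by
  have hL := equivIco_mem (y - x)
  have hd : (x + (t : S1)) - (x + (s : S1)) = ((t - s : ℝ) : S1) := by
    rw [AddCircle.coe_sub]; abel
  have hmem : t - s ∈ Set.Ico (0:ℝ) 1 :=
    ⟨sub_nonneg.mpr hst, lt_of_le_of_lt (by linarith [hs.1, ht.2] : t - s ≤ _) hL.2⟩
  rintro z ⟨u, hu, rfl⟩
  rw [hd, equivIco_coe hmem] at hu
  refine ⟨s + u, ⟨by linarith [hu.1, hs.1], by linarith [hu.2, ht.2]⟩, ?_⟩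
  simp only [AddCircle.coe_add, add_assoc]

lemma arc_key (x y : S1) {u v : S1} (hu : u ∈ arcCCW x y) (hv : v ∈ arcCCW x y) :
    arcCCW u v ⊆ arcCCW x y ∨ arcCCW v u ⊆ arcCCW x y := by
  obtain ⟨s, hs, rfl⟩ := hu
  obtain ⟨t, ht, rfl⟩ := hv
  rcases le_total s t with h | h
  · exact Or.inl (arc_subset x y hs ht h)
  · exact Or.inr (arc_subset x y ht hs h)

lemma arc_compact (x y : S1) : IsCompact (arcCCW x y) :=
  (isCompact_Icc).image (continuous_const.add (AddCircle.continuous_mk' 1))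

lemma image_arc_bounded {Γ : Type*} [MetricSpace Γ] (e : S1 ≃ₜ Γ) (a b : S1) :
    Bornology.IsBounded (e '' arcCCW a b) :=
  ((arc_compact a b).image e.continuous).isBounded

lemma ddist_le_diam {Γ : Type*} [MetricSpace Γ] (e : S1 ≃ₜ Γ) (a b : S1) {u v : S1}
    (hu : u ∈ arcCCW a b) (hv : v ∈ arcCCW a b) :
    ddist e (e u) (e v) ≤ diam (e '' arcCCW a b) := by
  rw [ddist, e.symm_apply_apply, e.symm_apply_apply]
  rcases arc_key a b hu hv with h | h
  · exact (min_le_left _ _).trans (diam_mono (image_mono h) (image_arc_bounded e a b))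
  · exact (min_le_right _ _).trans (diam_mono (image_mono h) (image_arc_bounded e a b))

lemma sSup_squeeze {Γ : Type*} [MetricSpace Γ] (e : S1 ≃ₜ Γ) (a b : S1) :
    ddist e (e a) (e b) ≤
        sSup (Set.image2 (ddist e) (e '' arcCCW a b) (e '' arcCCW a b)) ∧
      sSup (Set.image2 (ddist e) (e '' arcCCW a b) (e '' arcCCW a b)) ≤
        diam (e '' arcCCW a b) := by
  have hbdd : ∀ w ∈ Set.image2 (ddist e) (e '' arcCCW a b) (e '' arcCCW a b),
      w ≤ diam (e '' arcCCW a b) := by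
    rintro w ⟨-, ⟨u, hu, rfl⟩, -, ⟨v, hv, rfl⟩, rfl⟩
    exact ddist_le_diam e a b hu hv
  constructor
  · exact le_csSup ⟨_, hbdd⟩
      (Set.mem_image2_of_mem (Set.mem_image_of_mem e (mem_arc_left a b))
        (Set.mem_image_of_mem e (mem_arc_right a b)))
  · exact csSup_le
      ⟨_, Set.mem_image2_of_mem (Set.mem_image_of_mem e (mem_arc_left a b))
        (Set.mem_image_of_mem e (mem_arc_right a b))⟩ hbdd

/-- `(Γ, dd)` is `1`-bounded turning: for all `x, y ∈ Γ` the subarc of smaller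
`dd`-diameter between `x` and `y` has `dd`-diameter equal to `dd x y`. -/
theorem ddist_one_boundedTurning {Γ : Type*} [MetricSpace Γ] (e : S1 ≃ₜ Γ) :
    ∀ x y : Γ,
      min (sSup (Set.image2 (ddist e) (e '' arcCCW (e.symm x) (e.symm y))
              (e '' arcCCW (e.symm x) (e.symm y))))
          (sSup (Set.image2 (ddist e) (e '' arcCCW (e.symm y) (e.symm x))
              (e '' arcCCW (e.symm y) (e.symm x)))) = ddist e x y := by
  intro x y
  have hA := sSup_squeeze e (e.symm x) (e.symm y)
  have hB := sSup_squeeze e (e.symm y) (e.symm x)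
  rw [e.apply_symm_apply, e.apply_symm_apply] at hA hB
  have hdd : ddist e x y =
      min (diam (e '' arcCCW (e.symm x) (e.symm y)))
        (diam (e '' arcCCW (e.symm y) (e.symm x))) := rfl
  have hdd' : ddist e y x =
      min (diam (e '' arcCCW (e.symm y) (e.symm x)))
        (diam (e '' arcCCW (e.symm x) (e.symm y))) := rfl
  have hsymm : ddist e y x = ddist e x y := by rw [hdd, hdd', min_comm]
  refine le_antisymm ?_ (le_min hA.1 (hsymm ▸ hB.1))
  rw [hdd]
  exact min_le_min hA.2 hB.2
end
end

section
/- Let A be a metric Jordan arc and N ≥ 2 an integer. Then A can be divided into N consecutive subarcs of equal diameter; i.e., there exist points 0 = s₀ < s₁ < … < s_N = 1 (under a parametrization A ≅ [0,1]) such that diam A[s₀,s₁] = diam A[s₁,s₂] = … = diam A[s_{N−1},s_N]. -/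
open Metric Set

noncomputable section

abbrev I01 := Set.Icc (0 : ℝ) 1

/-!
Write `D a b = diam (e '' Icc a b)`: it is jointly continuous, antitone in `a`, monotone in `b`,
and positive for `a < b`. Let `v n x` be the largest possible smallest piece `D` over partitions
of `[0, x]` into `n + 1` pieces; then `v (n + 1) x = ⨆ y, min (v n y) (D y x)`, each `v n` is
continuous, and by the intermediate value theorem the supremum is attained at a cut point `y`
with `v n y = D y x`. Unwinding this recursion from `x = 1` yields a partition all of whose
pieces have diameter `v (N - 1) 1 > 0`.
-/

open Function (uncurry)

section Diameter

variable {X : Type*} [PseudoMetricSpace X]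

theorem diam_range_eq_iSup_dist {β : Type*} {g : β → X} (hg : Bornology.IsBounded (range g)) :
    diam (range g) = ⨆ p : β × β, dist (g p.1) (g p.2) := by
  obtain ⟨C, hC⟩ := isBounded_iff.1 hg
  have hbdd : BddAbove (range fun p : β × β => dist (g p.1) (g p.2)) :=
    ⟨C, forall_mem_range.2 fun p => hC (mem_range_self _) (mem_range_self _)⟩
  refine le_antisymm ?_ (Real.iSup_le (fun p => dist_le_diam_of_mem hg (mem_range_self _)
    (mem_range_self _)) diam_nonneg)
  refine diam_le_of_forall_dist_le (Real.iSup_nonneg fun _ => dist_nonneg) ?_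
  rintro _ ⟨a, rfl⟩ _ ⟨b, rfl⟩
  exact le_ciSup hbdd (a, b)

variable {α : Type*} [LinearOrder α] [TopologicalSpace α] {f : α → X}

/-- Clamping both points into `Icc a b` writes the diameter as a supremum over the fixed compact
square `α × α`, so that `IsCompact.continuous_sSup` applies. -/
theorem continuous_diam_image_Icc [OrderClosedTopology α] [CompactSpace α] (hf : Continuous f) :
    Continuous (uncurry fun a b => diam (f '' Icc a b)) := by
  let clamp : α × α → α → α := fun ab p => max ab.1 (min ab.2 p)
  have hclamp : Continuous (uncurry clamp) := by fun_prop
  have key : ∀ ab : α × α, diam (f '' Icc ab.1 ab.2) =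
      ⨆ p : α × α, dist (f (clamp ab p.1)) (f (clamp ab p.2)) := by
    rintro ⟨a, b⟩
    rcases le_or_gt a b with hab | hba
    · have hrange : range (f ∘ clamp (a, b)) = f '' Icc a b := by
        rw [range_comp]
        congr 1
        ext p
        refine ⟨?_, fun hp => ⟨p, by simp [clamp, hp.1, hp.2]⟩⟩
        rintro ⟨q, rfl⟩
        exact ⟨le_max_left _ _, max_le hab (min_le_left _ _)⟩
      rw [← hrange, diam_range_eq_iSup_dist]
      · rfl
      · exact (isCompact_range (hf.comp (hclamp.comp (Continuous.prodMk_right _)))).isBounded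
    · have hconst : ∀ p, clamp (a, b) p = a := fun p =>
        max_eq_left ((min_le_left _ _).trans hba.le)
      simp [hconst, Icc_eq_empty_of_lt hba]
  simp_rw [Function.uncurry_def, key, iSup, ← image_univ]
  exact isCompact_univ.continuous_sSup (by fun_prop)

variable [CompactIccSpace α]

theorem antitone_diam_image_Icc (hf : Continuous f) (b : α) :
    Antitone fun a => diam (f '' Icc a b) := fun _ _ ha =>
  diam_mono (image_mono (Icc_subset_Icc_left ha)) (isCompact_Icc.image hf).isBounded

theorem monotone_diam_image_Icc (hf : Continuous f) (a : α) :
    Monotone fun b => diam (f '' Icc a b) := fun _ _ hb =>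
  diam_mono (image_mono (Icc_subset_Icc_right hb)) (isCompact_Icc.image hf).isBounded

end Diameter

theorem diam_image_Icc_pos {α X : Type*} [LinearOrder α] [TopologicalSpace α]
    [CompactIccSpace α] [MetricSpace X] {f : α → X} (hf : Continuous f)
    (hinj : Function.Injective f) {a b : α} (hab : a < b) : 0 < diam (f '' Icc a b) :=
  (dist_pos.2 (hinj.ne hab.ne)).trans_le <| dist_le_diam_of_mem (isCompact_Icc.image hf).isBounded
    (mem_image_of_mem f (left_mem_Icc.2 hab.le)) (mem_image_of_mem f (right_mem_Icc.2 hab.le))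

section MaxMinSplit

variable {α : Type*} [LinearOrder α] [OrderBot α] {D : α → α → ℝ}

/-- The largest value of `min_i D (s i) (s (i + 1))` over partitions
`⊥ = s 0 ≤ s 1 ≤ ⋯ ≤ s (n + 1) = x`, computed by recursion on the last cut point. -/
def maxMinSplit (D : α → α → ℝ) : ℕ → α → ℝ
  | 0, x => D ⊥ x
  | n + 1, x => ⨆ y, min (maxMinSplit D n y) (D y x)

theorem maxMinSplit_succ_le_of_forall {n : ℕ} {x : α} {c : ℝ}
    (h : ∀ y, min (maxMinSplit D n y) (D y x) ≤ c) : maxMinSplit D (n + 1) x ≤ c :=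
  ciSup_le h

theorem le_maxMinSplit_succ (hanti : ∀ b, Antitone (D · b)) (n : ℕ) (x y : α) :
    min (maxMinSplit D n y) (D y x) ≤ maxMinSplit D (n + 1) x :=
  le_ciSup (f := fun y => min (maxMinSplit D n y) (D y x))
    ⟨D ⊥ x, forall_mem_range.2 fun _ => (min_le_right _ _).trans (hanti x bot_le)⟩ y

theorem maxMinSplit_le (hanti : ∀ b, Antitone (D · b)) (n : ℕ) (x : α) :
    maxMinSplit D n x ≤ D ⊥ x := by
  cases n with
  | zero => exact le_rfl
  | succ n =>
    exact maxMinSplit_succ_le_of_forall fun _ => (min_le_right _ _).trans (hanti x bot_le)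

theorem le_maxMinSplit_self (hanti : ∀ b, Antitone (D · b)) (n : ℕ) (x : α) :
    D x x ≤ maxMinSplit D n x := by
  induction n with
  | zero => exact hanti x bot_le
  | succ n ih => exact (le_min ih le_rfl).trans (le_maxMinSplit_succ hanti n x x)

theorem monotone_maxMinSplit (hanti : ∀ b, Antitone (D · b)) (hmono : ∀ a, Monotone (D a))
    (n : ℕ) : Monotone (maxMinSplit D n) := by
  intro x x' hx
  cases n with
  | zero => exact hmono ⊥ hx
  | succ n =>
    exact maxMinSplit_succ_le_of_forall fun y =>
      (min_le_min_left _ (hmono y hx)).trans (le_maxMinSplit_succ hanti n x' y)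

theorem maxMinSplit_pos [DenselyOrdered α] (hanti : ∀ b, Antitone (D · b))
    (hpos : ∀ a b, a < b → 0 < D a b) (n : ℕ) {x : α} (hx : ⊥ < x) :
    0 < maxMinSplit D n x := by
  induction n generalizing x with
  | zero => exact hpos ⊥ x hx
  | succ n ih =>
    obtain ⟨y, hy, hyx⟩ := exists_between hx
    exact (lt_min (ih hy) (hpos y x hyx)).trans_le (le_maxMinSplit_succ hanti n x y)

end MaxMinSplit

section EqualSplit

variable {α : Type*} [CompleteLinearOrder α] [TopologicalSpace α] [OrderTopology α]
  {D : α → α → ℝ}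

theorem continuous_maxMinSplit (hD : Continuous (uncurry D)) (n : ℕ) :
    Continuous (maxMinSplit D n) := by
  induction n with
  | zero => exact hD.comp (continuous_const.prodMk continuous_id)
  | succ n ih =>
    simp_rw [maxMinSplit, iSup, ← image_univ]
    exact isCompact_univ.continuous_sSup (f := fun x y => min (maxMinSplit D n y) (D y x))
      ((ih.comp continuous_snd).min (hD.comp continuous_swap))

variable [DenselyOrdered α]

theorem exists_maxMinSplit_succ_eq (hD : Continuous (uncurry D))
    (hanti : ∀ b, Antitone (D · b)) (hmono : ∀ a, Monotone (D a)) (n : ℕ) (x : α) :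
    ∃ y ≤ x, maxMinSplit D n y = D y x ∧ maxMinSplit D (n + 1) x = D y x := by
  have hcont : ContinuousOn (fun y => maxMinSplit D n y - D y x) (Icc ⊥ x) :=
    ((continuous_maxMinSplit hD n).sub
      (hD.comp (continuous_id.prodMk continuous_const))).continuousOn
  obtain ⟨y, hy, hyx⟩ := intermediate_value_Icc bot_le hcont
    ⟨sub_nonpos.2 ((maxMinSplit_le hanti n ⊥).trans (hmono ⊥ bot_le)),
      sub_nonneg.2 (le_maxMinSplit_self hanti n x)⟩
  have hcross : maxMinSplit D n y = D y x := sub_eq_zero.1 hyx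
  refine ⟨y, hy.2, hcross, le_antisymm (maxMinSplit_succ_le_of_forall fun w => ?_) ?_⟩
  · rcases le_total w y with hwy | hyw
    · exact (min_le_left _ _).trans (hcross ▸ monotone_maxMinSplit hanti hmono n hwy)
    · exact (min_le_right _ _).trans (hanti x hyw)
  · simpa [hcross] using le_maxMinSplit_succ hanti n x y

theorem exists_split_eq_maxMinSplit (hD : Continuous (uncurry D))
    (hanti : ∀ b, Antitone (D · b)) (hmono : ∀ a, Monotone (D a)) (n : ℕ) (x : α) :
    ∃ s : ℕ → α, s 0 = ⊥ ∧ s (n + 1) = x ∧ (∀ i ≤ n, s i ≤ s (i + 1)) ∧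
      ∀ i ≤ n, D (s i) (s (i + 1)) = maxMinSplit D n x := by
  induction n generalizing x with
  | zero => exact ⟨fun i => if i = 0 then ⊥ else x, rfl, rfl, by simp, by simp [maxMinSplit]⟩
  | succ n ih =>
    obtain ⟨y, hyx, hcross, hval⟩ := exists_maxMinSplit_succ_eq hD hanti hmono n x
    obtain ⟨s, hs0, hsy, hsmono, hsD⟩ := ih y
    refine ⟨Function.update s (n + 2) x, by simp [hs0], by simp, fun i hi => ?_, fun i hi => ?_⟩
    · rcases hi.lt_or_eq with hi | rfl
      · simpa [Function.update_of_ne (by omega : i ≠ n + 2),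
          Function.update_of_ne (by omega : i + 1 ≠ n + 2)] using hsmono i (by omega)
      · simpa [hsy] using hyx
    · rcases hi.lt_or_eq with hi | rfl
      · simpa [Function.update_of_ne (by omega : i ≠ n + 2),
          Function.update_of_ne (by omega : i + 1 ≠ n + 2), hval, ← hcross]
          using hsD i (by omega)
      · simp [hsy, hval]

theorem exists_strictMono_split_eq [Nontrivial α] (hD : Continuous (uncurry D))
    (hanti : ∀ b, Antitone (D · b)) (hmono : ∀ a, Monotone (D a)) (hself : ∀ a, D a a = 0)
    (hpos : ∀ a b, a < b → 0 < D a b) {N : ℕ} (hN : 0 < N) :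
    ∃ s : ℕ → α, s 0 = ⊥ ∧ s N = ⊤ ∧ (∀ i < N, s i < s (i + 1)) ∧
      ∀ i < N, ∀ j < N, D (s i) (s (i + 1)) = D (s j) (s (j + 1)) := by
  obtain ⟨n, rfl⟩ := Nat.exists_eq_add_one_of_ne_zero hN.ne'
  obtain ⟨s, hs0, hsN, hsmono, hsD⟩ := exists_split_eq_maxMinSplit hD hanti hmono n ⊤
  have hvalue_pos := maxMinSplit_pos hanti hpos n (bot_lt_top : (⊥ : α) < ⊤)
  refine ⟨s, hs0, hsN, fun i hi => (hsmono i (by omega)).lt_of_ne fun heq => ?_,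
    fun i hi j hj => by rw [hsD i (by omega), hsD j (by omega)]⟩
  have hpiece := hsD i (by omega)
  rw [heq, hself] at hpiece
  exact hvalue_pos.ne hpiece

end EqualSplit

/-- Any metric Jordan arc `A` can be divided into `N ≥ 2` consecutive subarcs of equal
diameter. -/
theorem exists_equal_diameter_division
    {A : Type*} [MetricSpace A] (e : I01 ≃ₜ A) (N : ℕ) (hN : 2 ≤ N) :
    ∃ s : ℕ → I01, s 0 = ⟨0, by norm_num⟩ ∧ s N = ⟨1, by norm_num⟩ ∧
      (∀ i < N, s i < s (i + 1)) ∧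
      (∀ i < N, ∀ j < N,
        diam (e '' Set.Icc (s i) (s (i + 1))) = diam (e '' Set.Icc (s j) (s (j + 1)))) :=
  exists_strictMono_split_eq (continuous_diam_image_Icc e.continuous)
    (antitone_diam_image_Icc e.continuous) (monotone_diam_image_Icc e.continuous)
    (fun a => by simp) (fun _ _ => diam_image_Icc_pos e.continuous e.injective) (by omega)
end
end

section
/- Let d be a metric on [0,1] such that d(s,t) = diam_d [s,t] for all s ≤ t (1-bounded turning), and let ε > 0. Define d_ε(s,t) := d(s,t) + ε|t−s|. Then d_ε is a metric on [0,1] satisfying diam_{d_ε}[s,t] = d_ε(s,t) for all s ≤ t, and d_ε is strictly increasing: [s,t] ⊊ [s',t'] ⊆ [0,1] implies d_ε(s,t) < d_ε(s',t'). -/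
open Metric Set

noncomputable section

/-- The diameter of a set `S ⊆ [0,1]` with respect to a metric `d` on `[0,1]`. -/
def ddiam (d : I01 → I01 → ℝ) (S : Set I01) : ℝ :=
  sSup (Set.image2 d S S)

/-- The perturbed metric `d_ε(s,t) = d(s,t) + ε|t − s|`. -/
def dEps (d : I01 → I01 → ℝ) (ε : ℝ) (s t : I01) : ℝ :=
  d s t + ε * |(t : ℝ) - (s : ℝ)|

/-- If `d` is a `1`-bounded turning metric on `[0,1]` and `ε > 0`, then `d_ε` is a metric
with `diam_{d_ε}[s,t] = d_ε(s,t)`, and `d_ε` is strictly increasing in the interval. -/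
theorem dEps_metric_diam_strictMono (d : I01 → I01 → ℝ) (ε : ℝ) (hε : 0 < ε)
    (hd_self : ∀ x, d x x = 0)
    (hd_pos : ∀ x y, x ≠ y → 0 < d x y)
    (hd_symm : ∀ x y, d x y = d y x)
    (hd_tri : ∀ x y z, d x z ≤ d x y + d y z)
    (h1bt : ∀ s t : I01, s ≤ t → d s t = ddiam d (Set.Icc s t)) :
    ((∀ x, dEps d ε x x = 0) ∧
     (∀ x y, x ≠ y → 0 < dEps d ε x y) ∧
     (∀ x y, dEps d ε x y = dEps d ε y x) ∧
     (∀ x y z, dEps d ε x z ≤ dEps d ε x y + dEps d ε y z)) ∧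
    (∀ s t : I01, s ≤ t → dEps d ε s t = ddiam (dEps d ε) (Set.Icc s t)) ∧
    (∀ s t s' t' : I01, s ≤ t → Set.Icc s t ⊂ Set.Icc s' t' →
      dEps d ε s t < dEps d ε s' t') := by
  have hd_nonneg : ∀ x y : I01, 0 ≤ d x y := by
    intro x y
    rcases eq_or_ne x y with h | h
    · simp [h, hd_self]
    · exact (hd_pos x y h).le
  have hbdd : ∀ s t : I01, s ≤ t →
      BddAbove (Set.image2 d (Set.Icc s t) (Set.Icc s t)) := by
    intro s t hst
    rcases eq_or_lt_of_le hst with h | h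
    · subst h
      simp [Set.Icc_self]
    · by_contra hb
      have h2 := h1bt s t hst
      rw [ddiam, Real.sSup_of_not_bddAbove hb] at h2
      exact absurd h2 (ne_of_gt (hd_pos s t h.ne))
  have hkey : ∀ s t x y : I01, s ≤ t → x ∈ Set.Icc s t → y ∈ Set.Icc s t →
      d x y ≤ d s t := by
    intro s t x y hst hx hy
    rw [h1bt s t hst]
    exact le_csSup (hbdd s t hst) (Set.mem_image2_of_mem hx hy)
  have habs : ∀ s t x y : I01, x ∈ Set.Icc s t → y ∈ Set.Icc s t →
      |(y : ℝ) - (x : ℝ)| ≤ (t : ℝ) - (s : ℝ) := by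
    intro s t x y hx hy
    have h1 : (s : ℝ) ≤ x := hx.1
    have h2 : (x : ℝ) ≤ t := hx.2
    have h3 : (s : ℝ) ≤ y := hy.1
    have h4 : (y : ℝ) ≤ t := hy.2
    rw [abs_sub_le_iff]
    constructor <;> linarith
  have hkeyE : ∀ s t x y : I01, s ≤ t → x ∈ Set.Icc s t → y ∈ Set.Icc s t →
      dEps d ε x y ≤ dEps d ε s t := by
    intro s t x y hst hx hy
    have h1 := hkey s t x y hst hx hy
    have h2 := habs s t x y hx hy
    have h3 : (s : ℝ) ≤ t := hst
    unfold dEps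
    rw [abs_of_nonneg (by linarith : (0:ℝ) ≤ (t:ℝ) - (s:ℝ))]
    nlinarith
  have hE_nonneg : ∀ x y : I01, 0 ≤ dEps d ε x y := by
    intro x y
    unfold dEps
    have := hd_nonneg x y
    have := abs_nonneg ((y : ℝ) - (x : ℝ))
    nlinarith
  refine ⟨⟨?_, ?_, ?_, ?_⟩, ?_, ?_⟩
  · intro x; simp [dEps, hd_self]
  · intro x y hxy
    have := hd_pos x y hxy
    have := abs_nonneg ((y : ℝ) - (x : ℝ))
    unfold dEps; nlinarith
  · intro x y
    unfold dEps
    rw [hd_symm, abs_sub_comm]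
  · intro x y z
    have := hd_tri x y z
    have := abs_sub_le ((x : ℝ)) ((y : ℝ)) ((z : ℝ))
    unfold dEps
    rw [abs_sub_comm (x:ℝ) (y:ℝ), abs_sub_comm (x:ℝ) (z:ℝ), abs_sub_comm (y:ℝ) (z:ℝ)] at *
    nlinarith
  · intro s t hst
    have hmem : s ∈ Set.Icc s t := ⟨le_refl s, hst⟩
    have hmem' : t ∈ Set.Icc s t := ⟨hst, le_refl t⟩
    rw [ddiam]
    apply le_antisymm
    · exact le_csSup ⟨dEps d ε s t, by
        rintro z ⟨x, hx, y, hy, rfl⟩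
        exact hkeyE s t x y hst hx hy⟩ (Set.mem_image2_of_mem hmem hmem')
    · apply Real.sSup_le
      · rintro z ⟨x, hx, y, hy, rfl⟩
        exact hkeyE s t x y hst hx hy
      · exact hE_nonneg s t
  · intro s t s' t' hst hss
    have hsub := hss.subset
    have hs : s ∈ Set.Icc s' t' := hsub ⟨le_refl s, hst⟩
    have ht : t ∈ Set.Icc s' t' := hsub ⟨hst, le_refl t⟩
    have hs't' : s' ≤ t' := le_trans hs.1 hs.2
    have hd' : d s t ≤ d s' t' := hkey s' t' s t hs't' hs ht
    have hne : ¬ (s' = s ∧ t' = t) := by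
      rintro ⟨rfl, rfl⟩
      exact hss.ne rfl
    have h1 : (s' : ℝ) ≤ s := hs.1
    have h2 : (t : ℝ) ≤ t' := ht.2
    have hlt : (t : ℝ) - (s : ℝ) < (t' : ℝ) - (s' : ℝ) := by
      rcases lt_or_eq_of_le hs.1 with h | h
      · have : (s' : ℝ) < s := h
        linarith
      · rcases lt_or_eq_of_le ht.2 with h' | h'
        · have : (t : ℝ) < t' := h'
          linarith
        · exact absurd ⟨h, h'.symm⟩ hne
    unfold dEps
    have h3 : (s : ℝ) ≤ t := hst
    rw [abs_of_nonneg (by linarith : (0:ℝ) ≤ (t:ℝ) - (s:ℝ)),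
        abs_of_nonneg (by linarith : (0:ℝ) ≤ (t':ℝ) - (s':ℝ))]
    nlinarith
end
end

section
/- Let A be a 1-bounded turning metric Jordan arc, and 0 < δ ≤ diam A. For each n, divide A into n subarcs of equal diameter, and let n be the smallest integer for which this common diameter is ≤ δ. Then each of the n subarcs has diameter ≥ δ/2. -/
open Metric Set

noncomputable section

/-- The subarc of a Jordan arc `A` (parametrized by `e : I01 ≃ₜ A`) between `x` and `y`. -/
def subarc {A : Type*} [MetricSpace A] (e : I01 ≃ₜ A) (x y : A) : Set A :=
  e '' Set.uIcc (e.symm x) (e.symm y)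

/-- `s` divides the arc `A` into `n` consecutive subarcs, each of diameter `D`. -/
def IsEqualDivision {A : Type*} [MetricSpace A] (e : I01 ≃ₜ A)
    (n : ℕ) (s : ℕ → I01) (D : ℝ) : Prop :=
  s 0 = ⟨0, by norm_num⟩ ∧ s n = ⟨1, by norm_num⟩ ∧ (∀ i < n, s i < s (i + 1)) ∧
    ∀ i < n, diam (e '' Set.Icc (s i) (s (i + 1))) = D

open Filter Topology Function

/-!
If `D < δ / 2`, then `n ≥ 2`, since for `n = 1` the only subarc is `A` itself. Divide `A` into
`n - 1` subarcs of equal diameter `c`. Interlacing the two divisions, some subarc of the coarser one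
lies inside two consecutive subarcs of the finer one, so by `1`-bounded turning
`c ≤ 2 D < δ`, contradicting the minimality of `n`.

The arc-division lemma is proved in the parameter interval. With `d a b` the distance between the
points of parameters `a ≤ b`, the perturbed `d a b + η (b - a)` is strictly increasing in `b`, so
the greedy division with step `c` depends continuously on `c`, and the intermediate value theorem
yields a step for which the `k`-th greedy point is exactly `1`. Letting `η → 0` along a convergent subsequence
gives an equal division for `d` itself; its steps are nonzero by the triangle inequality.
-/

theorem continuous_of_strictMono_of_apply_eq {X : Type*} [TopologicalSpace X]
    {G : X → ℝ → ℝ} (hG : Continuous (uncurry G)) (hmono : ∀ x, StrictMono (G x))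
    {r y : X → ℝ} (hy : Continuous y) (hr : ∀ x, G x (r x) = y x) : Continuous r := by
  have hGt : ∀ t, Continuous fun x => G x t := fun t =>
    hG.comp (continuous_id.prodMk continuous_const)
  refine continuous_iff_continuousAt.2 fun x₀ => tendsto_order.2 ⟨fun l hl => ?_, fun u hu => ?_⟩
  · have hev := (hGt l).continuousAt.eventually_lt hy.continuousAt ((hr x₀).symm ▸ hmono x₀ hl)
    filter_upwards [hev] with x hx
    exact (hmono x).lt_iff_lt.1 ((hr x).symm ▸ hx)
  · have hev := hy.continuousAt.eventually_lt (hGt u).continuousAt ((hr x₀) ▸ hmono x₀ hu)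
    filter_upwards [hev] with x hx
    exact (hmono x).lt_iff_lt.1 ((hr x).symm ▸ hx)

def greedySeq (ρ : ℝ → ℝ → ℝ) (c : ℝ) : ℕ → ℝ
  | 0 => 0
  | i + 1 => ρ (greedySeq ρ c i) c

theorem continuous_greedySeq {ρ : ℝ → ℝ → ℝ} (hρ : Continuous (uncurry ρ)) (i : ℕ) :
    Continuous fun c => greedySeq ρ c i := by
  induction i with
  | zero => exact continuous_const
  | succ i ih => exact hρ.comp (ih.prodMk continuous_id)

theorem exists_equal_steps_of_strictMono {F : ℝ → ℝ → ℝ} (hF : Continuous (uncurry F))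
    (hmono : ∀ a, StrictMono (F a)) (hsurj : ∀ a, Surjective (F a)) (hF0 : ∀ a, F a a = 0)
    {k : ℕ} (hk : k ≠ 0) :
    ∃ (t : ℕ → ℝ) (c : ℝ), t 0 = 0 ∧ t k = 1 ∧ StrictMono t ∧ ∀ i, F (t i) (t (i + 1)) = c := by
  choose ρ hρ using hsurj
  have hρc : Continuous (uncurry ρ) :=
    continuous_of_strictMono_of_apply_eq (G := fun p : ℝ × ℝ => F p.1)
      (hF.comp (continuous_fst.fst.prodMk continuous_snd)) (fun p => hmono p.1) continuous_snd
      (fun p => hρ p.1 p.2)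
  have hρ0 : ∀ a, ρ a 0 = a := fun a => (hmono a).injective (by rw [hρ, hF0])
  have hρ_ge : ∀ a {c}, 0 ≤ c → a ≤ ρ a c := fun a c hc =>
    (hmono a).le_iff_le.1 (by rw [hρ, hF0]; exact hc)
  set g := greedySeq ρ
  have hg0 : ∀ i, g 0 i = 0 := by
    intro i
    induction i with
    | zero => rfl
    | succ i ih => simp only [g, greedySeq] at ih ⊢; rw [ih, hρ0]
  have hg_mono : ∀ {c}, 0 ≤ c → Monotone (g c) := fun hc =>
    monotone_nat_of_le_succ fun i => hρ_ge _ hc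
  have h1 : 0 < F 0 1 := (hF0 0).symm.trans_lt (hmono 0 zero_lt_one)
  have hg1 : g (F 0 1) 1 = 1 := (hmono 0).injective (hρ 0 _)
  obtain ⟨c, hc, hgc⟩ : ∃ c ∈ Icc 0 (F 0 1), g c k = 1 :=
    intermediate_value_Icc h1.le (continuous_greedySeq hρc k).continuousOn
      ⟨(hg0 k).trans_le zero_le_one,
        hg1.symm.le.trans (hg_mono h1.le (Nat.one_le_iff_ne_zero.2 hk))⟩
  have hc0 : 0 < c := hc.1.lt_of_ne (by rintro rfl; simp [hg0] at hgc)
  refine ⟨g c, c, rfl, hgc, strictMono_nat_of_lt_succ fun i => ?_, fun i => hρ _ _⟩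
  exact (hmono (g c i)).lt_iff_lt.1 (by rw [hF0]; exact (hρ _ c).symm ▸ hc0)

section Monotone

variable {d : ℝ → ℝ → ℝ}

theorem exists_perturbed_equal_steps (hd : Continuous (uncurry d)) (hmono : ∀ a, Monotone (d a))
    (hd0 : ∀ a, d a a = 0) {η : ℝ} (hη : 0 < η) {k : ℕ} (hk : k ≠ 0) :
    ∃ (t : ℕ → ℝ) (c : ℝ), t 0 = 0 ∧ t k = 1 ∧ StrictMono t ∧
      ∀ i, d (t i) (t (i + 1)) + η * (t (i + 1) - t i) = c := by
  have hlin : ∀ a, StrictMono fun b => η * (b - a) := fun a _ _ h =>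
    mul_lt_mul_of_pos_left (sub_lt_sub_right h a) hη
  refine exists_equal_steps_of_strictMono (F := fun a b => d a b + η * (b - a))
    (hd.add (continuous_const.mul (continuous_snd.sub continuous_fst)))
    (fun a => (hmono a).add_strictMono (hlin a)) (fun a => ?_) (fun a => by simp [hd0]) hk
  refine Continuous.surjective
    ((hd.comp (continuous_const.prodMk continuous_id)).add (by fun_prop)) ?_ ?_
  · refine tendsto_atTop_mono' _ ((eventually_ge_atTop a).mono fun b hb => ?_)
      ((tendsto_atTop_add_const_right _ (-a) tendsto_id).const_mul_atTop hη)
    exact le_add_of_nonneg_left (hd0 a ▸ hmono a hb)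
  · refine tendsto_atBot_mono' _ ((eventually_le_atBot a).mono fun b hb => ?_)
      ((tendsto_atBot_add_const_right _ (-a) tendsto_id).const_mul_atBot hη)
    exact add_le_of_nonpos_left (hd0 a ▸ hmono a hb)

theorem apply_zero_le_sum_range (hd0 : ∀ a, d a a = 0)
    (htri : ∀ a b c, a ≤ b → b ≤ c → d a c ≤ d a b + d b c) {x : ℕ → ℝ} (hx : Monotone x)
    (k : ℕ) : d (x 0) (x k) ≤ ∑ i ∈ Finset.range k, d (x i) (x (i + 1)) := by
  induction k with
  | zero => simp [hd0]
  | succ k ih =>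
    rw [Finset.sum_range_succ]
    exact (htri _ _ _ (hx k.zero_le) (hx k.le_succ)).trans (add_le_add ih le_rfl)

theorem exists_monotone_equal_steps (hd : Continuous (uncurry d))
    (hmono : ∀ a, Monotone (d a)) (hd0 : ∀ a, d a a = 0) {k : ℕ} (hk : k ≠ 0) :
    ∃ x : ℕ → ℝ, Monotone x ∧ x 0 = 0 ∧ x k = 1 ∧ (∀ i, x i ∈ Icc 0 1) ∧
      ∀ i < k, d (x i) (x (i + 1)) = d (x 0) (x 1) := by
  choose T C hT0 hTk hTmono hTstep using fun m : ℕ =>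
    exists_perturbed_equal_steps hd hmono hd0 (Nat.one_div_pos_of_nat (n := m)) hk
  have hTmem : ∀ m i, i ≤ k → T m i ∈ Icc 0 1 := fun m i hi =>
    ⟨hT0 m ▸ (hTmono m).monotone i.zero_le, hTk m ▸ (hTmono m).monotone hi⟩
  -- freezing the points after the `k`-th keeps the sequences in a compact set
  obtain ⟨x, hx, φ, hφ, hlim⟩ := (isCompact_univ_pi fun _ => isCompact_Icc).tendsto_subseq
    (x := fun m i => T m (min i k)) fun m i _ => hTmem m _ (min_le_right _ _)
  have hTx : ∀ i ≤ k, Tendsto (fun m => T (φ m) i) atTop (𝓝 (x i)) := fun i hi => by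
    simpa [min_eq_left hi] using tendsto_pi_nhds.1 hlim i
  have hstep_lim : ∀ i < k, Tendsto (fun m => d (T (φ m) i) (T (φ m) (i + 1)) +
      1 / ((φ m : ℝ) + 1) * (T (φ m) (i + 1) - T (φ m) i)) atTop
      (𝓝 (d (x i) (x (i + 1)) + 0 * (x (i + 1) - x i))) := fun i hi =>
    ((hd.tendsto _).comp ((hTx i hi.le).prodMk_nhds (hTx (i + 1) hi))).add
      ((tendsto_one_div_add_atTop_nhds_zero_nat.comp hφ.tendsto_atTop).mul
        ((hTx (i + 1) hi).sub (hTx i hi.le)))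
  refine ⟨x, fun i j hij => ?_, tendsto_nhds_unique (hTx 0 k.zero_le) (by simp [hT0]),
    tendsto_nhds_unique (hTx k le_rfl) (by simp [hTk]), fun i => mem_univ_pi.1 hx i,
    fun i hi => ?_⟩
  · exact le_of_tendsto_of_tendsto' (tendsto_pi_nhds.1 hlim i) (tendsto_pi_nhds.1 hlim j)
      fun m => (hTmono _).monotone (min_le_min_right k hij)
  · simpa using tendsto_nhds_unique (hstep_lim i hi)
      ((hstep_lim 0 (Nat.pos_of_ne_zero hk)).congr fun m => (hTstep _ 0).trans (hTstep _ i).symm)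

theorem exists_equal_steps_of_monotone (hd : Continuous (uncurry d))
    (hmono : ∀ a, Monotone (d a)) (hd0 : ∀ a, d a a = 0)
    (htri : ∀ a b c, a ≤ b → b ≤ c → d a c ≤ d a b + d b c) (h01 : 0 < d 0 1)
    {k : ℕ} (hk : k ≠ 0) :
    ∃ (x : ℕ → ℝ) (c : ℝ), x 0 = 0 ∧ x k = 1 ∧ (∀ i, x i ∈ Icc 0 1) ∧
      (∀ i < k, x i < x (i + 1)) ∧ ∀ i < k, d (x i) (x (i + 1)) = c := by
  obtain ⟨x, hx_mono, hx0, hxk, hx, hstep⟩ := exists_monotone_equal_steps hd hmono hd0 hk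
  have hc : 0 < d (x 0) (x 1) := by
    have hsum := apply_zero_le_sum_range hd0 htri hx_mono k
    rw [Finset.sum_congr rfl fun i hi => hstep i (Finset.mem_range.1 hi), Finset.sum_const,
      Finset.card_range, nsmul_eq_mul] at hsum
    refine pos_of_mul_pos_right (lt_of_lt_of_le ?_ hsum) k.cast_nonneg
    rwa [hx0, hxk]
  refine ⟨x, d (x 0) (x 1), hx0, hxk, hx, fun i hi => ?_, hstep⟩
  exact (hx_mono i.le_succ).lt_of_ne fun h => hc.ne' (by rw [← hstep i hi, h, hd0])

end Monotone

theorem exists_step_within_two_steps {α : Type*} [LinearOrder α] {s t : ℕ → α} {k : ℕ}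
    (hk : k ≠ 0) (hs : ∀ i ≤ k, s i ≤ s (i + 1)) (h0 : s 0 ≤ t 0) (hk' : t k ≤ s (k + 1)) :
    ∃ j < k, s j ≤ t j ∧ t (j + 1) ≤ s (j + 2) := by
  by_contra! h
  have hst : ∀ j < k, s j ≤ t j := by
    intro j
    induction j with
    | zero => exact fun _ => h0
    | succ j ih => exact fun hj => (hs (j + 1) hj.le).trans (h j (by omega) (ih (by omega))).le
  have hlast := h (k - 1) (by omega) (hst (k - 1) (by omega))
  rw [show k - 1 + 2 = k + 1 by omega, show k - 1 + 1 = k by omega] at hlast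
  exact hlast.not_ge hk'

section BoundedTurning

variable {A : Type*} [MetricSpace A] (e : I01 ≃ₜ A)

def IsOneBoundedTurning : Prop :=
  ∀ x y : A, diam (subarc e x y) = dist x y

variable {e}

theorem IsOneBoundedTurning.diam_image_Icc (h1bt : IsOneBoundedTurning e) {x y : I01}
    (hxy : x ≤ y) : diam (e '' Icc x y) = dist (e x) (e y) := by
  simpa [subarc, uIcc_of_le hxy] using h1bt (e x) (e y)

theorem IsOneBoundedTurning.dist_le_dist (h1bt : IsOneBoundedTurning e) {a b b' : I01}
    (hab : a ≤ b) (hbb' : b ≤ b') : dist (e a) (e b) ≤ dist (e a) (e b') := by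
  rw [← h1bt.diam_image_Icc (hab.trans hbb')]
  exact dist_le_diam_of_mem (isCompact_Icc.image e.continuous).isBounded
    (mem_image_of_mem e ⟨le_rfl, hab.trans hbb'⟩) (mem_image_of_mem e ⟨hab, hbb'⟩)

theorem IsOneBoundedTurning.exists_isEqualDivision (h1bt : IsOneBoundedTurning e) {k : ℕ}
    (hk : k ≠ 0) : ∃ t c, IsEqualDivision e k t c := by
  set p := projIcc (0 : ℝ) 1 zero_le_one
  -- the `max` makes `d a` vanish left of `a`, hence monotone on all of `ℝ`
  obtain ⟨x, c, hx0, hxk, hx, hlt, hstep⟩ :=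
    exists_equal_steps_of_monotone (d := fun a b => dist (e (p a)) (e (p (max a b))))
      (by fun_prop)
      (fun a b b' hbb' => h1bt.dist_le_dist (monotone_projIcc _ (le_max_left a b))
        (monotone_projIcc _ (max_le_max_left a hbb')))
      (fun a => by simp)
      (fun a b c hab hbc => by
        simpa [max_eq_right hab, max_eq_right hbc, max_eq_right (hab.trans hbc)] using
          dist_triangle _ _ _)
      (dist_pos.2 (e.injective.ne (by simp [p, projIcc_left, projIcc_right]))) hk
  refine ⟨fun i => ⟨x i, hx i⟩, c, Subtype.ext hx0, Subtype.ext hxk,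
    fun i hi => Subtype.mk_lt_mk.2 (hlt i hi), fun i hi => ?_⟩
  rw [h1bt.diam_image_Icc (Subtype.mk_le_mk.2 (hlt i hi).le), ← hstep i hi]
  simp only [p, max_eq_right (hlt i hi).le, projIcc_of_mem _ (hx i),
    projIcc_of_mem _ (hx (i + 1))]

theorem IsEqualDivision.le_two_mul (h1bt : IsOneBoundedTurning e) {k : ℕ} (hk : k ≠ 0)
    {s t : ℕ → I01} {D c : ℝ} (hs : IsEqualDivision e (k + 1) s D)
    (ht : IsEqualDivision e k t c) : c ≤ 2 * D := by
  obtain ⟨hs0, hsk, hslt, hsD⟩ := hs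
  obtain ⟨ht0, htk, -, htc⟩ := ht
  obtain ⟨j, hj, hsj, htj⟩ := exists_step_within_two_steps hk (fun i hi => (hslt i (by omega)).le)
    (hs0.trans ht0.symm).le (htk.trans hsk.symm).le
  have hstep : ∀ i < k + 1, dist (e (s i)) (e (s (i + 1))) = D := fun i hi =>
    (h1bt.diam_image_Icc (hslt i hi).le).symm.trans (hsD i hi)
  calc c = diam (e '' Icc (t j) (t (j + 1))) := (htc j hj).symm
    _ ≤ diam (e '' Icc (s j) (s (j + 2))) :=
      diam_mono (image_mono (Icc_subset_Icc hsj htj)) (isCompact_Icc.image e.continuous).isBounded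
    _ = dist (e (s j)) (e (s (j + 2))) :=
      h1bt.diam_image_Icc ((hslt j (by omega)).trans (hslt (j + 1) (by omega))).le
    _ ≤ dist (e (s j)) (e (s (j + 1))) + dist (e (s (j + 1))) (e (s (j + 2))) :=
      dist_triangle _ _ _
    _ = 2 * D := by rw [hstep j (by omega), hstep (j + 1) (by omega), two_mul]

theorem IsEqualDivision.diam_univ_eq {s : ℕ → I01} {D : ℝ} (hs : IsEqualDivision e 1 s D) :
    diam (univ : Set A) = D := by
  have hIcc : Icc (s 0) (s 1) = univ := by
    ext x
    simp [hs.1, hs.2.1, ← Subtype.coe_le_coe, x.2.2]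
  rw [← hs.2.2.2 0 one_pos, hIcc, image_univ, e.surjective.range_eq]

end BoundedTurning

theorem equal_division_lower_bound_general
    {A : Type*} [MetricSpace A] (e : I01 ≃ₜ A)
    (h1bt : ∀ x y : A, diam (subarc e x y) = dist x y)
    (δ : ℝ) (hδ : δ ≤ diam (Set.univ : Set A))
    (n : ℕ) (s : ℕ → I01) (D : ℝ)
    (hdiv : IsEqualDivision e n s D)
    (hmin : ∀ k, 1 ≤ k → k < n → ∀ (t : ℕ → I01) (D' : ℝ),
      IsEqualDivision e k t D' → δ < D') :
    δ / 2 ≤ D := by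
  rcases n with _ | _ | k
  · simpa using hdiv.1.symm.trans hdiv.2.1
  · have hD := hdiv.diam_univ_eq
    linarith [diam_nonneg (s := (univ : Set A))]
  · obtain ⟨t, c, ht⟩ := IsOneBoundedTurning.exists_isEqualDivision h1bt k.succ_ne_zero
    have hδc := hmin (k + 1) (by omega) (by omega) t c ht
    have hc := hdiv.le_two_mul h1bt k.succ_ne_zero ht
    linarith

/-- If `n` is the smallest number of equal-diameter subarcs of a `1`-bounded turning arc
with common diameter `≤ δ`, then this common diameter is `≥ δ/2`. -/
theorem equal_division_lower_bound
    {A : Type*} [MetricSpace A] (e : I01 ≃ₜ A)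
    (h1bt : ∀ x y : A, diam (subarc e x y) = dist x y)
    (δ : ℝ) (hδ0 : 0 < δ) (hδ : δ ≤ diam (Set.univ : Set A))
    (n : ℕ) (hn : 1 ≤ n) (s : ℕ → I01) (D : ℝ)
    (hdiv : IsEqualDivision e n s D) (hD : D ≤ δ)
    (hmin : ∀ k, 1 ≤ k → k < n → ∀ (t : ℕ → I01) (D' : ℝ),
      IsEqualDivision e k t D' → δ < D') :
    δ / 2 ≤ D :=
  equal_division_lower_bound_general e h1bt δ hδ n s D hdiv hmin
end
end

section
/- Let A be a 1-bounded turning arc divided into n consecutive subarcs A₁,…,A_n of equal diameter, and also into k consecutive subarcs A'₁,…,A'_k of equal diameter, where the common diameter of the A'_j is strictly greater than twice the common diameter of the A_i. Then 2k + 1 ≤ n. -/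
open Metric Set

noncomputable section

/-!
An arc of diameter `> 2D` cannot lie inside two consecutive subarcs of diameter `D`, whose union
has diameter at most `2D`. Hence, walking along the arc, the `j`-th point `t j` of the coarse
division stays strictly beyond the `2j`-th point `s (2j)` of the fine one; at `j = k` this puts
`s (2k)` strictly before the endpoint `s n`, so `2k < n`.
-/

section CoveringDivision

variable {α X : Type*} [LinearOrder α] [PseudoMetricSpace X] (f : α → X)

theorem diam_image_Icc_le_add {a b c : α} (hab : a ≤ b) (hbc : b ≤ c) :
    diam (f '' Icc a c) ≤ diam (f '' Icc a b) + diam (f '' Icc b c) := by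
  rw [← Icc_union_Icc_eq_Icc hab hbc, image_union]
  exact diam_union' ⟨f b, mem_image_of_mem f (right_mem_Icc.2 hab),
    mem_image_of_mem f (left_mem_Icc.2 hbc)⟩

theorem diam_image_Icc_mono [BoundedSpace X] {a b c d : α} (hca : c ≤ a) (hbd : b ≤ d) :
    diam (f '' Icc a b) ≤ diam (f '' Icc c d) :=
  diam_mono (image_mono (Icc_subset_Icc hca hbd)) (Bornology.IsBounded.all _)

variable {f} {s : ℕ → α} {n : ℕ} {D : ℝ}
  (hs : ∀ i < n, s i ≤ s (i + 1)) (hsD : ∀ i < n, diam (f '' Icc (s i) (s (i + 1))) ≤ D)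
include hs

theorem le_add_of_forall_le_succ {i m : ℕ} (h : i + m ≤ n) : s i ≤ s (i + m) := by
  induction m with
  | zero => rfl
  | succ m ih => exact (ih (by omega)).trans (hs (i + m) (by omega))

include hsD

theorem diam_image_Icc_le_mul {i m : ℕ} (h : i + m ≤ n) :
    diam (f '' Icc (s i) (s (i + m))) ≤ m * D := by
  induction m with
  | zero => simp
  | succ m ih =>
    calc diam (f '' Icc (s i) (s (i + (m + 1))))
        ≤ diam (f '' Icc (s i) (s (i + m))) + diam (f '' Icc (s (i + m)) (s (i + m + 1))) :=
          diam_image_Icc_le_add f (le_add_of_forall_le_succ hs (by omega)) (hs _ (by omega))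
      _ ≤ m * D + D := add_le_add (ih (by omega)) (hsD _ (by omega))
      _ = (m + 1 : ℕ) * D := by push_cast; ring

theorem covering_step [BoundedSpace X] (hD : 0 ≤ D) {i : ℕ} {a b : α} (hi : i ≤ n)
    (ha : s i ≤ a) (hb : b ≤ s n) (hdiam : 2 * D < diam (f '' Icc a b)) :
    i + 2 ≤ n ∧ s (i + 2) < b := by
  by_contra hcon
  obtain ⟨m, hm2, hmn, hbm⟩ : ∃ m ≤ 2, i + m ≤ n ∧ b ≤ s (i + m) := by
    by_cases h2 : i + 2 ≤ n
    · exact ⟨2, le_rfl, h2, not_lt.1 fun h ↦ hcon ⟨h2, h⟩⟩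
    · exact ⟨n - i, by omega, by omega, by rwa [Nat.add_sub_cancel' hi]⟩
  have hsub : diam (f '' Icc a b) ≤ 2 * D := calc
    diam (f '' Icc a b) ≤ diam (f '' Icc (s i) (s (i + m))) := diam_image_Icc_mono f ha hbm
    _ ≤ m * D := diam_image_Icc_le_mul hs hsD hmn
    _ ≤ 2 * D := mul_le_mul_of_nonneg_right (by exact_mod_cast hm2) hD
  linarith

theorem covering_two_mul_add_two [BoundedSpace X] (hD : 0 ≤ D) {t : ℕ → α} {k : ℕ}
    (h0 : s 0 ≤ t 0) (ht : ∀ j, t j ≤ s n)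
    (htD : ∀ j < k, 2 * D < diam (f '' Icc (t j) (t (j + 1)))) :
    ∀ j < k, 2 * j + 2 ≤ n ∧ s (2 * j + 2) < t (j + 1) := by
  intro j hj
  induction j with
  | zero => exact covering_step hs hsD hD (Nat.zero_le n) h0 (ht 1) (htD 0 hj)
  | succ j ih =>
    obtain ⟨hjn, hjt⟩ := ih (by omega)
    rw [show 2 * (j + 1) + 2 = 2 * j + 2 + 2 by ring]
    exact covering_step hs hsD hD hjn hjt.le (ht _) (htD _ hj)

end CoveringDivision

theorem equal_division_covering_bound_general
    {A : Type*} [MetricSpace A] (e : I01 ≃ₜ A)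
    (n k : ℕ) (hn : 1 ≤ n) (hk : 1 ≤ k) (s t : ℕ → I01) (D D' : ℝ)
    (hdiv : IsEqualDivision e n s D) (hdiv' : IsEqualDivision e k t D')
    (hDD' : 2 * D < D') :
    2 * k + 1 ≤ n := by
  obtain ⟨hs0, hsn, hs, hsD⟩ := hdiv
  obtain ⟨ht0, htk, -, htD⟩ := hdiv'
  have : CompactSpace A := e.compactSpace
  have hD : 0 ≤ D := hsD 0 hn ▸ diam_nonneg
  have ht_le : ∀ j, t j ≤ s n := fun j ↦ hsn ▸ Subtype.coe_le_coe.1 (t j).2.2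
  obtain ⟨k, rfl⟩ : ∃ k', k = k' + 1 := ⟨k - 1, by omega⟩
  obtain ⟨hkn, hlt⟩ := covering_two_mul_add_two (fun i hi ↦ (hs i hi).le)
    (fun i hi ↦ (hsD i hi).le) hD (hs0.trans ht0.symm).le ht_le
    (fun j hj ↦ hDD'.trans_eq (htD j hj).symm) k (Nat.lt_succ_self k)
  have hkn' : 2 * k + 2 ≠ n := by
    rintro rfl
    exact hlt.ne (hsn.trans htk.symm)
  omega

/-- If a `1`-bounded turning arc is divided into `n` equal subarcs of diameter `D` and into
`k` equal subarcs of diameter `D' > 2D`, then `2k + 1 ≤ n`. -/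
theorem equal_division_covering_bound
    {A : Type*} [MetricSpace A] (e : I01 ≃ₜ A)
    (h1bt : ∀ x y : A, diam (subarc e x y) = dist x y)
    (n k : ℕ) (hn : 1 ≤ n) (hk : 1 ≤ k) (s t : ℕ → I01) (D D' : ℝ)
    (hdiv : IsEqualDivision e n s D) (hdiv' : IsEqualDivision e k t D')
    (hDD' : 2 * D < D') :
    2 * k + 1 ≤ n :=
  equal_division_covering_bound_general e n k hn hk s t D D' hdiv hdiv' hDD'
end
end

section
/- Let I, I' be two intervals of the same subdivision 𝓘ⁿ of S¹ with |I'|/|I| ≥ 2^{i+1} for some i ≥ 1. Then dist(I, I') ≥ 2^i·|I|. -/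
open Metric Set

noncomputable section

/-- The arc of the unit circle corresponding to the parameter interval `[u, v]`. -/
def carc (u v : ℝ) : Set S1 :=
  (fun t : ℝ => (t : S1)) '' Set.Icc u v

private lemma ratio_bounds {x y : ℝ} (hx : 0 < x)
    (h : y / x ∈ ({1 / 2, 1, 2} : Set ℝ)) : x / 2 ≤ y ∧ y / 2 ≤ x := by
  have hy : y = (y / x) * x := by field_simp
  rcases h with h | h | h <;> rw [h] at hy <;> constructor <;> nlinarith

private lemma round_bound {x c : ℝ} (h1 : c ≤ |x|) (h2 : c ≤ 1 - |x|) :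
    c ≤ |x - round x| := by
  set m : ℤ := round x with hm
  have h3 := le_abs_self x
  have h4 := neg_abs_le x
  rcases lt_trichotomy m 0 with hlt | heq | hgt
  · have hm1 : (m : ℝ) ≤ -1 := by exact_mod_cast (by omega : m ≤ -1)
    have := le_abs_self (x - (m : ℝ))
    linarith
  · simp [heq] at *; linarith
  · have hm1 : (1 : ℝ) ≤ (m : ℝ) := by exact_mod_cast (by omega : 1 ≤ m)
    have := neg_abs_le (x - (m : ℝ))
    linarith

/-- If `I, I'` are intervals of the same subdivision of `S¹` (adjacent length ratios in
`{1/2, 1, 2}`) with `|I'|/|I| ≥ 2^(i+1)`, then `dist(I, I') ≥ 2^i·|I|`. -/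
theorem dist_of_length_ratio (M : ℕ) (hM : 1 ≤ M) (p : ℕ → ℝ)
    (hp0 : p 0 = 0) (hp1 : p M = 1) (hmono : ∀ j < M, p j < p (j + 1))
    (hadj : ∀ j, j + 1 < M →
      (p (j + 2) - p (j + 1)) / (p (j + 1) - p j) ∈ ({1 / 2, 1, 2} : Set ℝ))
    (hadj_wrap : (p 1 - p 0) / (p M - p (M - 1)) ∈ ({1 / 2, 1, 2} : Set ℝ))
    (j j' : ℕ) (hj : j < M) (hj' : j' < M) (i : ℕ) (hi : 1 ≤ i)
    (hratio : (2 : ℝ) ^ (i + 1) * (p (j + 1) - p j) ≤ p (j' + 1) - p j') :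
    ∀ u ∈ carc (p j) (p (j + 1)), ∀ v ∈ carc (p j') (p (j' + 1)),
      (2 : ℝ) ^ i * (p (j + 1) - p j) ≤ dist u v := by
  -- basic notation
  set L : ℝ := p (j + 1) - p j with hL
  set L' : ℝ := p (j' + 1) - p j' with hL'
  set c : ℝ := (2 : ℝ) ^ i * L with hc
  have hLpos : 0 < L := sub_pos.mpr (hmono j hj)
  have hL'pos : 0 < L' := sub_pos.mpr (hmono j' hj')
  -- monotonicity
  have hle : ∀ a b : ℕ, a ≤ b → b ≤ M → p a ≤ p b := by
    intro a b hab
    induction b, hab using Nat.le_induction with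
    | base => intro _; exact le_rfl
    | succ n hn ih => intro hnM; exact (ih (by omega)).trans (hmono n (by omega)).le
  have h2i : (2 : ℝ) ≤ 2 ^ i := by
    calc (2 : ℝ) = 2 ^ 1 := (pow_one 2).symm
    _ ≤ 2 ^ i := pow_le_pow_right₀ one_le_two hi
  have hcL : 2 * L ≤ c := by
    rw [hc]; nlinarith
  have h2c : 2 * c ≤ L' := by
    rw [hc]; nlinarith [hratio, pow_succ (2:ℝ) i]
  have hcpos : 0 < c := by positivity
  -- the left neighbor of I' (cyclically) has length ≥ L'/2 ≥ c
  have hleft : (1 ≤ j' → c ≤ p j' - p (j' - 1)) ∧ (j' = 0 → c ≤ p M - p (M - 1)) := by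
    constructor
    · intro h1
      have h := hadj (j' - 1) (by omega)
      have e1 : j' - 1 + 1 = j' := by omega
      have e2 : j' - 1 + 2 = j' + 1 := by omega
      rw [e1, e2] at h
      have hx : 0 < p j' - p (j' - 1) := by
        have := hmono (j' - 1) (by omega)
        rw [e1] at this; linarith
      have := (ratio_bounds hx h).2
      rw [← hL'] at this; linarith
    · intro h0
      have hx : 0 < p M - p (M - 1) := sub_pos.mpr (by
        have := hmono (M - 1) (by omega)
        have e : M - 1 + 1 = M := by omega
        rwa [e] at this)
      have := (ratio_bounds hx hadj_wrap).2
      have e : p 1 - p 0 = L' := by rw [hL', h0]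
      rw [e] at this; linarith
  -- the right neighbor of I' (cyclically) has length ≥ L'/2 ≥ c
  have hright : (j' + 1 < M → c ≤ p (j' + 2) - p (j' + 1)) ∧
      (j' + 1 = M → c ≤ p 1 - p 0) := by
    constructor
    · intro h1
      have h := hadj j' h1
      have := (ratio_bounds hL'pos h).1
      linarith
    · intro h1
      have hx : 0 < p M - p (M - 1) := by
        rw [← h1]; simpa using sub_pos.mpr (hmono j' hj')
      have := (ratio_bounds hx hadj_wrap).2
      have hy := (ratio_bounds hx hadj_wrap).1
      have e : p M - p (M - 1) = L' := by rw [hL', ← h1]; simp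
      rw [e] at hy; linarith
  have hp_nonneg : ∀ k, k ≤ M → 0 ≤ p k := fun k hk => hp0 ▸ hle 0 k (Nat.zero_le k) hk
  have hp_le_one : ∀ k, k ≤ M → p k ≤ 1 := fun k hk => hp1 ▸ hle k M hk le_rfl
  -- main argument
  rintro u ⟨a, ha, rfl⟩ v ⟨b, hb, rfl⟩
  have hdist : dist ((a : S1)) ((b : S1)) = |(a - b) - round (a - b)| := by
    rw [dist_eq_norm, ← QuotientAddGroup.mk_sub]
    rw [show ‖((a - b : ℝ) : S1)‖ = |(a - b) - round ((1 : ℝ)⁻¹ * (a - b)) * 1| from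
      AddCircle.norm_eq 1]
    simp
  rw [hdist]
  set x : ℝ := a - b with hx
  -- It suffices to bound |x| and 1 - |x|
  apply round_bound
  all_goals {
    rcases lt_trichotomy j j' with hjj | hjj | hjj
    -- case j < j'
    · have hne : j + 2 ≤ j' := by
        rcases Nat.lt_or_ge (j + 1) j' with h | h
        · omega
        · exfalso
          have e : j' = j + 1 := by omega
          have := hleft.1 (by omega)
          rw [e] at this; simp at this
          rw [← hL] at this; linarith
      have hblow : c ≤ b - a := by
        have h1 : p (j + 1) ≤ p (j' - 1) := hle _ _ (by omega) (by omega)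
        have h2 := hleft.1 (by omega)
        have := ha.2; have := hb.1
        linarith
      have habs : |x| = b - a := by
        rw [hx, abs_of_nonpos (by linarith)]; ring
      rcases Nat.lt_or_ge (j' + 1) M with hend | hend
      · -- 1 - b + a ≥ p(j'+2) - p(j'+1) ≥ c ; also c ≤ b - a
        have h2 := hright.1 hend
        have h3 : p (j' + 2) ≤ 1 := hp_le_one _ (by omega)
        have h4 : 0 ≤ p j := hp_nonneg _ (by omega)
        have := ha.1; have := hb.2
        rw [habs]; linarith
      · have hM' : j' + 1 = M := by omega
        have hj1 : 1 ≤ j := by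
          by_contra h
          have hj0 : j = 0 := by omega
          have h2 := hright.2 hM'
          rw [hj0] at hL
          rw [← hL] at h2; linarith
        have h2 := hright.2 hM'
        have h5 : p 1 ≤ p j := hle 1 j hj1 (by omega)
        have h6 : p (j' + 1) = 1 := by rw [hM', hp1]
        have := ha.1; have := hb.2
        rw [habs]; linarith
    -- case j = j'
    · exfalso
      rw [hjj] at hL
      rw [← hL'] at hL
      have : L = L' := hL
      nlinarith
    -- case j' < j
    · have hj'M : j' + 1 < M := by omega
      have hne : j' + 2 ≤ j := by
        rcases Nat.lt_or_ge (j' + 1) j with h | h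
        · omega
        · exfalso
          have e : j = j' + 1 := by omega
          have h2 := hright.1 hj'M
          rw [show j' + 2 = j + 1 from by omega] at h2
          rw [show j' + 1 = j from e.symm] at h2
          rw [← hL] at h2; linarith
      have halow : c ≤ a - b := by
        have h1 : p (j' + 2) ≤ p j := hle _ _ (by omega) (by omega)
        have h2 := hright.1 hj'M
        have := ha.1; have := hb.2
        linarith
      have habs : |x| = a - b := by
        rw [hx, abs_of_nonneg (by linarith)]
      rcases Nat.lt_or_ge 0 j' with hstart | hstart
      · have h2 := hleft.1 (by omega)
        have h3 : 0 ≤ p (j' - 1) := hp_nonneg _ (by omega)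
        have h4 : p (j + 1) ≤ 1 := hp_le_one _ (by omega)
        have := ha.2; have := hb.1
        rw [habs]; linarith
      · have hj'0 : j' = 0 := by omega
        have h2 := hleft.2 hj'0
        have hjM : j + 1 ≤ M - 1 := by
          by_contra h
          have e : j = M - 1 := by omega
          have e2 : M - 1 + 1 = M := by omega
          rw [e, e2] at hL
          rw [← hL] at h2; linarith
        have h5 : p (j + 1) ≤ p (M - 1) := hle _ _ hjM (by omega)
        have h6 : p j' = 0 := by rw [hj'0, hp0]
        have := ha.2; have := hb.1
        rw [habs]; linarith
  }
end
end

section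
/- Let x ∈ S¹ and 0 < t ≤ 1/2. Let Jᵐ ∈ 𝓘ᵐ and Iⁿ ∈ 𝓘ⁿ be largest subdivision intervals contained in [x−t,x] and [x,x+t] respectively, i.e., |Jᵐ| = δ([x−t,x]) and |Iⁿ| = δ([x,x+t]). Then |m − n| ≤ 4. -/
open Metric Set

noncomputable section

/-- The relative length of the `i`-th subinterval in the dyadic division of an interval
into `N` subintervals: `1/4, 1/8, …` symmetrically from both endpoints. -/
def dyadicLen (N i : ℕ) : ℝ :=
  if N % 2 = 0 then
    (2 : ℝ) ^ (-(min (min i (N - 1 - i) + 2) (N / 2) : ℤ))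
  else
    (if min i (N - 1 - i) + 3 ≤ (N + 1) / 2 then
      (2 : ℝ) ^ (-(min i (N - 1 - i) + 2 : ℤ))
    else if min i (N - 1 - i) + 2 = (N + 1) / 2 then
      (2 : ℝ) ^ (-((N + 1) / 2 : ℤ))
    else
      (2 : ℝ) ^ (-(((N + 1) / 2 : ℤ) - 1)))

/-- The nested subdivisions `𝓘ⁿ` of the unit circle `S¹ = [0,1]/{0∼1}` constructed via the
dyadic length pattern.  Generation `n` consists of the intervals
`Iⁿⱼ = [p n j, p n (j+1)]`, `j < N n`, with `0` a common subdivision point. -/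
structure DyadicSubdivisions where
  /-- number of intervals of generation `n` -/
  N : ℕ → ℕ
  /-- subdivision points of generation `n` -/
  p : ℕ → ℕ → ℝ
  four_le : ∀ n, 4 ≤ N n
  zero : ∀ n, p n 0 = 0
  last : ∀ n, p n (N n) = 1
  mono : ∀ n, ∀ j < N n, p n j < p n (j + 1)
  /-- `𝓘ⁿ⁺¹` subdivides `𝓘ⁿ`: every point of generation `n` is one of generation `n+1` -/
  nested : ∀ n, ∀ i ≤ N n, ∃ j ≤ N (n + 1), p (n + 1) j = p n i
  /-- a child interval has length at most a quarter of its parent -/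
  quarter : ∀ n, ∀ j < N (n + 1), ∀ i < N n,
    Set.Icc (p (n + 1) j) (p (n + 1) (j + 1)) ⊆ Set.Icc (p n i) (p n (i + 1)) →
    p (n + 1) (j + 1) - p (n + 1) j ≤ (p n (i + 1) - p n i) / 4
  /-- adjacent intervals of the same generation have length ratio in `{1/2, 1, 2}` -/
  adjacent : ∀ n, ∀ j, j + 1 < N n →
    (p n (j + 2) - p n (j + 1)) / (p n (j + 1) - p n j) ∈ ({1 / 2, 1, 2} : Set ℝ)
  adjacent_wrap : ∀ n,
    (p n 1 - p n 0) / (p n (N n) - p n (N n - 1)) ∈ ({1 / 2, 1, 2} : Set ℝ)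
  /-- each interval is divided into its children following the dyadic pattern -/
  dyadic : ∀ n, ∀ i < N n, ∃ k K, 4 ≤ K ∧ k + K ≤ N (n + 1) ∧
    p (n + 1) k = p n i ∧ p (n + 1) (k + K) = p n (i + 1) ∧
    ∀ l < K, p (n + 1) (k + l + 1) - p (n + 1) (k + l) =
      dyadicLen K l * (p n (i + 1) - p n i)

/-- The subdivision interval `Iⁿⱼ` is contained in the circle interval `[a, b]`
(containment modulo the identification `0 ∼ 1`). -/
def ContainedIn (D : DyadicSubdivisions) (n j : ℕ) (a b : ℝ) : Prop :=
  j < D.N n ∧ ∃ m : ℤ, a ≤ D.p n j + m ∧ D.p n (j + 1) + m ≤ b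

/-- `δ([a,b])`: the maximal length of a subdivision interval contained in `[a,b]`. -/
def deltaMax (D : DyadicSubdivisions) (a b : ℝ) : ℝ :=
  sSup {d : ℝ | ∃ n j, ContainedIn D n j a b ∧ d = D.p n (j + 1) - D.p n j}

/-!
Write `δ([a, b]) ≤ L` when no subdivision interval inside `[a, b]` is longer than `L`. Two local
facts drive the proof. A subdivision interval sticking out of `[a, b]` overlaps it by at most
`4 L`: its first (or last) descendant of length comparable to the overlap fits in `[a, b]`. If
`[a, b]` lies inside a single subdivision interval, then `b - a ≤ 24 L`: descend to the generation
in which `[a, b]` first meets two children, and note that, because the dyadic lengths decay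
geometrically away from both ends of the parent, a run of consecutive children is at most `8`
times as long as its two extreme members together. With the adjacency condition, any subdivision
interval longer than `8 L` that meets `[a, b]` therefore forces `b - a ≤ 24 L`.

Now let `J` of generation `m` realize `δ([x - t, x])`, and let `I` of generation `n` lie in
`[x, x + t]`. If `m ≥ n + 4`, the generation-`n` ancestor `A` of `J` has length at least
`4⁴ |J| > 8 t`, so its generation-`n` neighbour towards `I` is longer than `2 t`, although it lies
between `x - t` and the right end of `I`. Exchanging the roles of the two sides gives `n ≤ m + 3`.
-/

def dyadicExp (K i : ℕ) : ℕ :=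
  if K % 2 = 0 then min (min i (K - 1 - i) + 2) (K / 2)
  else if min i (K - 1 - i) + 3 ≤ (K + 1) / 2 then min i (K - 1 - i) + 2
  else if min i (K - 1 - i) + 2 = (K + 1) / 2 then (K + 1) / 2
  else (K + 1) / 2 - 1

section dyadicLen

variable {K i : ℕ}

lemma dyadicLen_eq_half_pow (hi : i < K) :
    dyadicLen K i = (1 / 2 : ℝ) ^ dyadicExp K i := by
  rw [one_div, inv_pow, ← zpow_natCast, ← zpow_neg]
  unfold dyadicLen dyadicExp
  split_ifs <;> congr 1 <;> omega

lemma dyadicLen_pos (K i : ℕ) : 0 < dyadicLen K i := by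
  unfold dyadicLen
  split_ifs <;> positivity

lemma dyadicLen_le_quarter (hK : 4 ≤ K) (hi : i < K) : dyadicLen K i ≤ 1 / 4 := by
  have : 2 ≤ dyadicExp K i := by unfold dyadicExp; split_ifs <;> omega
  calc dyadicLen K i = (1 / 2 : ℝ) ^ dyadicExp K i := dyadicLen_eq_half_pow hi
    _ ≤ (1 / 2) ^ 2 := pow_le_pow_of_le_one (by norm_num) (by norm_num) this
    _ = 1 / 4 := by norm_num

lemma dyadicLen_zero (hK : 4 ≤ K) : dyadicLen K 0 = 1 / 4 := by
  rw [dyadicLen_eq_half_pow (by omega),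
    show dyadicExp K 0 = 2 by unfold dyadicExp; split_ifs <;> omega]
  norm_num

lemma dyadicLen_last (hK : 4 ≤ K) : dyadicLen K (K - 1) = 1 / 4 := by
  rw [dyadicLen_eq_half_pow (by omega),
    show dyadicExp K (K - 1) = 2 by unfold dyadicExp; split_ifs <;> omega]
  norm_num

lemma dyadicExp_valley {i₀ i₁ : ℕ} (hK : 4 ≤ K) (h₀ : i₀ ≤ i) (h₁ : i ≤ i₁) (hi₁ : i₁ < K) :
    dyadicExp K i₀ + (i - i₀) ≤ dyadicExp K i + 2 ∨
      dyadicExp K i₁ + (i₁ - i) ≤ dyadicExp K i + 2 := by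
  unfold dyadicExp
  split_ifs <;> omega

lemma dyadicLen_le_valley {i₀ i₁ : ℕ} (hK : 4 ≤ K) (h₀ : i₀ ≤ i) (h₁ : i ≤ i₁) (hi₁ : i₁ < K) :
    dyadicLen K i ≤
      4 * (dyadicLen K i₀ * (1 / 2) ^ (i - i₀) + dyadicLen K i₁ * (1 / 2) ^ (i₁ - i)) := by
  have key : ∀ e e' d : ℕ, e' + d ≤ e + 2 → (1 / 2 : ℝ) ^ e ≤ 4 * ((1 / 2) ^ e' * (1 / 2) ^ d) := by
    intro e e' d h
    calc (1 / 2 : ℝ) ^ e = 4 * (1 / 2) ^ (e + 2) := by ring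
      _ ≤ 4 * (1 / 2) ^ (e' + d) := by
        gcongr 4 * ?_
        exact pow_le_pow_of_le_one (by norm_num) (by norm_num) h
      _ = 4 * ((1 / 2) ^ e' * (1 / 2) ^ d) := by rw [pow_add]
  rw [dyadicLen_eq_half_pow (by omega), dyadicLen_eq_half_pow (by omega),
    dyadicLen_eq_half_pow hi₁]
  rcases dyadicExp_valley hK h₀ h₁ hi₁ with h | h
  · refine (key _ _ _ h).trans ?_
    gcongr
    exact le_add_of_nonneg_right (by positivity)
  · refine (key _ _ _ h).trans ?_
    gcongr
    exact le_add_of_nonneg_left (by positivity)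

lemma sum_half_pow_le_two {ι : Type*} {s : Finset ι} {f : ι → ℕ} (hf : Set.InjOn f s) :
    ∑ i ∈ s, (1 / 2 : ℝ) ^ f i ≤ 2 := by
  classical
  rw [← Finset.sum_image hf]
  calc ∑ j ∈ s.image f, (1 / 2 : ℝ) ^ j
      ≤ ∑ j ∈ Finset.range ((s.image f).sup id + 1), (1 / 2 : ℝ) ^ j := by
        refine Finset.sum_le_sum_of_subset_of_nonneg (fun j hj => ?_) (fun _ _ _ => by positivity)
        exact Finset.mem_range.2 (Nat.lt_succ_of_le (Finset.le_sup (f := id) hj))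
    _ ≤ 2 := sum_geometric_two_le _

lemma sum_dyadicLen_le {i₀ i₁ : ℕ} (hK : 4 ≤ K) (hi₁ : i₁ < K) :
    ∑ i ∈ Finset.Icc i₀ i₁, dyadicLen K i ≤ 8 * (dyadicLen K i₀ + dyadicLen K i₁) := by
  have hinj₀ : Set.InjOn (fun i => i - i₀) (Finset.Icc i₀ i₁) := by
    intro i hi j hj h; simp only [Finset.coe_Icc, Set.mem_Icc] at hi hj; simp only at h; omega
  have hinj₁ : Set.InjOn (fun i => i₁ - i) (Finset.Icc i₀ i₁) := by
    intro i hi j hj h; simp only [Finset.coe_Icc, Set.mem_Icc] at hi hj; simp only at h; omega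
  calc ∑ i ∈ Finset.Icc i₀ i₁, dyadicLen K i
      ≤ ∑ i ∈ Finset.Icc i₀ i₁,
          4 * (dyadicLen K i₀ * (1 / 2) ^ (i - i₀) + dyadicLen K i₁ * (1 / 2) ^ (i₁ - i)) := by
        refine Finset.sum_le_sum fun i hi => ?_
        rw [Finset.mem_Icc] at hi
        exact dyadicLen_le_valley hK hi.1 hi.2 hi₁
    _ = 4 * (dyadicLen K i₀ * ∑ i ∈ Finset.Icc i₀ i₁, (1 / 2 : ℝ) ^ (i - i₀) +
          dyadicLen K i₁ * ∑ i ∈ Finset.Icc i₀ i₁, (1 / 2 : ℝ) ^ (i₁ - i)) := by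
        rw [← Finset.mul_sum, Finset.sum_add_distrib, ← Finset.mul_sum, ← Finset.mul_sum]
    _ ≤ 4 * (dyadicLen K i₀ * 2 + dyadicLen K i₁ * 2) := by
        have := dyadicLen_pos K i₀
        have := dyadicLen_pos K i₁
        gcongr
        exacts [sum_half_pow_le_two hinj₀, sum_half_pow_le_two hinj₁]
    _ = 8 * (dyadicLen K i₀ + dyadicLen K i₁) := by ring

end dyadicLen

lemma le_two_mul_of_div_mem {x y : ℝ} (hx : 0 < x) (h : y / x ∈ ({1 / 2, 1, 2} : Set ℝ)) :
    x ≤ 2 * y ∧ y ≤ 2 * x := by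
  simp only [Set.mem_insert_iff, Set.mem_singleton_iff] at h
  rcases h with h | h | h <;> rw [div_eq_iff hx.ne'] at h <;> constructor <;> linarith

namespace DyadicSubdivisions

variable (D : DyadicSubdivisions)

lemma N_pos (n : ℕ) : 0 < D.N n := by
  have := D.four_le n
  omega

/-- The points of generation `n`, indexed by `ℤ` and extended `1`-periodically, so that
`P n (j + N n * q) = p n j + q`. -/
def P (n : ℕ) (k : ℤ) : ℝ :=
  D.p n (k % D.N n).toNat + (k / D.N n : ℤ)

lemma P_natCast_add_mul (n : ℕ) {j : ℕ} (hj : j ≤ D.N n) (q : ℤ) :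
    D.P n (j + D.N n * q) = D.p n j + q := by
  have hN : (D.N n : ℤ) ≠ 0 := by exact_mod_cast (D.N_pos n).ne'
  rcases hj.lt_or_eq with hj | rfl
  · rw [P, Int.add_mul_emod_self_left, Int.add_mul_ediv_left _ _ hN,
      Int.emod_eq_of_lt (by positivity) (by exact_mod_cast hj),
      Int.ediv_eq_zero_of_lt (by positivity) (by exact_mod_cast hj)]
    simp
  · rw [show (D.N n : ℤ) + D.N n * q = (0 : ℕ) + D.N n * (q + 1) by push_cast; ring, P,
      Int.add_mul_emod_self_left, Int.add_mul_ediv_left _ _ hN, Nat.cast_zero, Int.zero_emod,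
      Int.zero_ediv, Int.toNat_zero, D.zero, D.last]
    push_cast
    ring

lemma P_natCast_add_mul_succ (n : ℕ) {r : ℕ} (hr : r < D.N n) (q : ℤ) :
    D.P n (r + D.N n * q + 1) = D.p n (r + 1) + q := by
  rw [show (r : ℤ) + D.N n * q + 1 = (r + 1 : ℕ) + D.N n * q by push_cast; ring,
    D.P_natCast_add_mul n (show r + 1 ≤ D.N n from hr)]

lemma P_N_mul (n : ℕ) (q : ℤ) : D.P n (D.N n * q) = q := by
  simpa [D.zero] using D.P_natCast_add_mul n (Nat.zero_le _) q

lemma exists_eq_natCast_add_mul (n : ℕ) (k : ℤ) : ∃ r < D.N n, ∃ q : ℤ, k = r + D.N n * q := by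
  have hN : (0 : ℤ) < D.N n := by exact_mod_cast D.N_pos n
  have h₀ := Int.emod_nonneg k hN.ne'
  have h₁ := Int.emod_lt_of_pos k hN
  refine ⟨(k % D.N n).toNat, by omega, k / D.N n, ?_⟩
  rw [Int.toNat_of_nonneg h₀, Int.emod_add_mul_ediv]

lemma P_lt_P_succ (n : ℕ) (k : ℤ) : D.P n k < D.P n (k + 1) := by
  obtain ⟨r, hr, q, rfl⟩ := D.exists_eq_natCast_add_mul n k
  rw [D.P_natCast_add_mul n hr.le, D.P_natCast_add_mul_succ n hr]
  linarith [D.mono n r hr]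

lemma P_strictMono (n : ℕ) : StrictMono (D.P n) :=
  strictMono_int_of_lt_succ (D.P_lt_P_succ n)

lemma P_adjacent (n : ℕ) (k : ℤ) :
    D.P n (k + 1) - D.P n k ≤ 2 * (D.P n (k + 2) - D.P n (k + 1)) ∧
      D.P n (k + 2) - D.P n (k + 1) ≤ 2 * (D.P n (k + 1) - D.P n k) := by
  obtain ⟨r, hr, q, rfl⟩ := D.exists_eq_natCast_add_mul n k
  have hpos := sub_pos.2 (D.mono n r hr)
  rw [D.P_natCast_add_mul n hr.le, D.P_natCast_add_mul_succ n hr]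
  rcases (show r + 1 ≤ D.N n from hr).lt_or_eq with hr' | hr'
  · rw [show (r : ℤ) + D.N n * q + 2 = (r + 1 : ℕ) + D.N n * q + 1 by push_cast; ring,
      D.P_natCast_add_mul_succ n hr']
    have := le_two_mul_of_div_mem hpos (D.adjacent n r hr')
    constructor <;> linarith
  · have hwrap := D.adjacent_wrap n
    rw [← hr', Nat.add_sub_cancel, hr', D.last, D.zero] at hwrap
    rw [hr', D.last] at hpos ⊢
    rw [show (r : ℤ) + D.N n * q + 2 = (0 : ℕ) + D.N n * (q + 1) + 1 by
        rw [← hr']; push_cast; ring, D.P_natCast_add_mul_succ n (D.N_pos n), zero_add]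
    have := le_two_mul_of_div_mem hpos hwrap
    push_cast
    constructor <;> linarith

lemma exists_P_le_lt (n : ℕ) (a : ℝ) : ∃ k, D.P n k ≤ a ∧ a < D.P n (k + 1) := by
  have hbdd : ∃ B, ∀ z, D.P n z ≤ a → z ≤ B := by
    refine ⟨D.N n * (⌊a⌋ + 1), fun z hz => (D.P_strictMono n).le_iff_le.1 ?_⟩
    rw [D.P_N_mul]
    push_cast
    linarith [Int.lt_floor_add_one a]
  obtain ⟨k, hk, hmax⟩ := Int.exists_greatest_of_bdd hbdd
    ⟨D.N n * ⌊a⌋, by rw [D.P_N_mul]; exact Int.floor_le a⟩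
  exact ⟨k, hk, lt_of_not_ge fun h => by linarith [hmax _ h]⟩

lemma exists_P_lt_le (n : ℕ) (b : ℝ) : ∃ k, D.P n k < b ∧ b ≤ D.P n (k + 1) := by
  obtain ⟨k, hk, hk'⟩ := D.exists_P_le_lt n b
  rcases hk.lt_or_eq with hk | hk
  · exact ⟨k, hk, hk'.le⟩
  · exact ⟨k - 1, by rw [← hk]; exact D.P_strictMono n (by omega), by rw [sub_add_cancel, hk]⟩

/-- The intervals `c, …, c + K - 1` of generation `n + 1` are the children of the interval `k`
of generation `n`. -/
structure IsChildren (n : ℕ) (k c : ℤ) (K : ℕ) : Prop where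
  four_le : 4 ≤ K
  left : D.P (n + 1) c = D.P n k
  right : D.P (n + 1) (c + K) = D.P n (k + 1)
  len_eq : ∀ l < K, D.P (n + 1) (c + l + 1) - D.P (n + 1) (c + l) =
    dyadicLen K l * (D.P n (k + 1) - D.P n k)

lemma exists_isChildren (n : ℕ) (k : ℤ) : ∃ c K, D.IsChildren n k c K := by
  obtain ⟨r, hr, q, rfl⟩ := D.exists_eq_natCast_add_mul n k
  obtain ⟨c, K, hK, hcK, hleft, hright, hlen⟩ := D.dyadic n r hr
  have hk₁ : (r : ℤ) + D.N n * q + 1 = (r + 1 : ℕ) + D.N n * q := by push_cast; ring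
  have hP : ∀ l ≤ K, D.P (n + 1) (c + D.N (n + 1) * q + l) = D.p (n + 1) (c + l) + q := by
    intro l hl
    rw [show (c : ℤ) + D.N (n + 1) * q + l = (c + l : ℕ) + D.N (n + 1) * q by push_cast; ring,
      D.P_natCast_add_mul _ (by omega)]
  refine ⟨c + D.N (n + 1) * q, K, hK, ?_, ?_, fun l hl => ?_⟩
  · simpa [hleft, D.P_natCast_add_mul n hr.le] using hP 0 (Nat.zero_le _)
  · rw [hP K le_rfl, hright, hk₁, D.P_natCast_add_mul n (show r + 1 ≤ D.N n from hr)]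
  · rw [show (c : ℤ) + D.N (n + 1) * q + l + 1 = c + D.N (n + 1) * q + (l + 1 : ℕ) by
      push_cast; ring, hP (l + 1) hl, hP l hl.le, hk₁, D.P_natCast_add_mul n hr.le,
      D.P_natCast_add_mul n (show r + 1 ≤ D.N n from hr)]
    linear_combination hlen l hl

namespace IsChildren

variable {D} {n : ℕ} {k c : ℤ} {K : ℕ}

lemma exists_eq_add (h : D.IsChildren n k c K) {c' : ℤ} (h₁ : D.P n k < D.P (n + 1) (c' + 1))
    (h₂ : D.P (n + 1) c' < D.P n (k + 1)) : ∃ l < K, c' = c + l := by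
  rw [← h.left, (D.P_strictMono _).lt_iff_lt] at h₁
  rw [← h.right, (D.P_strictMono _).lt_iff_lt] at h₂
  exact ⟨(c' - c).toNat, by omega, by omega⟩

lemma exists_le_lt (h : D.IsChildren n k c K) {a : ℝ} (ha : D.P n k ≤ a)
    (ha' : a < D.P n (k + 1)) :
    ∃ l < K, D.P (n + 1) (c + l) ≤ a ∧ a < D.P (n + 1) (c + l + 1) := by
  obtain ⟨i, hi, hi'⟩ := D.exists_P_le_lt (n + 1) a
  obtain ⟨l, hl, rfl⟩ := h.exists_eq_add (by linarith) (by linarith)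
  exact ⟨l, hl, hi, hi'⟩

lemma exists_lt_le (h : D.IsChildren n k c K) {b : ℝ} (hb : D.P n k < b)
    (hb' : b ≤ D.P n (k + 1)) :
    ∃ l < K, D.P (n + 1) (c + l) < b ∧ b ≤ D.P (n + 1) (c + l + 1) := by
  obtain ⟨i, hi, hi'⟩ := D.exists_P_lt_le (n + 1) b
  obtain ⟨l, hl, rfl⟩ := h.exists_eq_add (by linarith) (by linarith)
  exact ⟨l, hl, hi, hi'⟩

lemma len_le_quarter (h : D.IsChildren n k c K) {l : ℕ} (hl : l < K) :
    D.P (n + 1) (c + l + 1) - D.P (n + 1) (c + l) ≤ (D.P n (k + 1) - D.P n k) / 4 := by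
  rw [h.len_eq l hl]
  have := (D.P_lt_P_succ n k)
  nlinarith [dyadicLen_le_quarter h.four_le hl]

lemma len_first (h : D.IsChildren n k c K) :
    D.P (n + 1) (c + 1) - D.P (n + 1) c = (D.P n (k + 1) - D.P n k) / 4 := by
  have := h.len_eq 0 (by have := h.four_le; omega)
  rw [dyadicLen_zero h.four_le] at this
  simpa [div_eq_inv_mul] using this

lemma len_last (h : D.IsChildren n k c K) :
    D.P (n + 1) (c + K) - D.P (n + 1) (c + K - 1) = (D.P n (k + 1) - D.P n k) / 4 := by
  have hK := h.four_le
  have := h.len_eq (K - 1) (by omega)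
  rw [dyadicLen_last hK, Nat.cast_sub (by omega)] at this
  rw [show c + K - 1 = c + ((K : ℤ) - (1 : ℕ)) by push_cast; ring]
  nth_rw 1 [show c + (K : ℤ) = c + ((K : ℤ) - (1 : ℕ)) + 1 by push_cast; ring]
  linarith

lemma span_le (h : D.IsChildren n k c K) {l₀ l₁ : ℕ} (hl₀₁ : l₀ ≤ l₁) (hl₁ : l₁ < K) :
    D.P (n + 1) (c + l₁ + 1) - D.P (n + 1) (c + l₀) ≤
      8 * ((D.P (n + 1) (c + l₀ + 1) - D.P (n + 1) (c + l₀)) +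
        (D.P (n + 1) (c + l₁ + 1) - D.P (n + 1) (c + l₁))) := by
  have htel := Finset.sum_Ico_sub (fun l : ℕ => D.P (n + 1) (c + l)) (show l₀ ≤ l₁ + 1 by omega)
  rw [Finset.Ico_add_one_right_eq_Icc] at htel
  push_cast [← add_assoc] at htel
  rw [← htel, Finset.sum_congr rfl fun l hl => h.len_eq l (by rw [Finset.mem_Icc] at hl; omega),
    ← Finset.sum_mul, h.len_eq l₀ (by omega), h.len_eq l₁ hl₁]
  have := (D.P_lt_P_succ n k)
  nlinarith [sum_dyadicLen_le h.four_le hl₁ (i₀ := l₀)]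

end IsChildren

lemma exists_parent (n : ℕ) (k : ℤ) : ∃ k', D.P n k' ≤ D.P (n + 1) k ∧
    D.P (n + 1) (k + 1) ≤ D.P n (k' + 1) ∧
    4 * (D.P (n + 1) (k + 1) - D.P (n + 1) k) ≤ D.P n (k' + 1) - D.P n k' := by
  obtain ⟨k', h₁, h₂⟩ := D.exists_P_le_lt n (D.P (n + 1) k)
  obtain ⟨c, K, h⟩ := D.exists_isChildren n k'
  obtain ⟨l, hl, rfl⟩ := h.exists_eq_add (h₁.trans_lt (D.P_lt_P_succ _ _)) h₂
  refine ⟨k', h₁, ?_, by linarith [h.len_le_quarter hl]⟩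
  rw [← h.right]
  exact (D.P_strictMono _).monotone (by omega)

lemma exists_ancestor (n d : ℕ) (k : ℤ) : ∃ k', D.P n k' ≤ D.P (n + d) k ∧
    D.P (n + d) (k + 1) ≤ D.P n (k' + 1) ∧
    4 ^ d * (D.P (n + d) (k + 1) - D.P (n + d) k) ≤ D.P n (k' + 1) - D.P n k' := by
  induction d generalizing k with
  | zero => exact ⟨k, le_rfl, le_rfl, by simp⟩
  | succ d ih =>
    obtain ⟨k₁, h₁, h₂, h₃⟩ := D.exists_parent (n + d) k
    obtain ⟨k', g₁, g₂, g₃⟩ := ih k₁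
    refine ⟨k', g₁.trans h₁, h₂.trans g₂, ?_⟩
    calc (4 : ℝ) ^ (d + 1) * (D.P (n + d + 1) (k + 1) - D.P (n + d + 1) k)
        = 4 ^ d * (4 * (D.P (n + d + 1) (k + 1) - D.P (n + d + 1) k)) := by ring
      _ ≤ 4 ^ d * (D.P (n + d) (k₁ + 1) - D.P (n + d) k₁) := by gcongr
      _ ≤ D.P n (k' + 1) - D.P n k' := g₃

/-- `δ([a, b]) ≤ L`: no subdivision interval contained in `[a, b]` is longer than `L`. -/
def DeltaLe (a b L : ℝ) : Prop :=
  ∀ g c, a ≤ D.P g c → D.P g (c + 1) ≤ b → D.P g (c + 1) - D.P g c ≤ L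

lemma deltaLe_deltaMax (a b : ℝ) : D.DeltaLe a b (deltaMax D a b) := by
  intro g c ha hb
  obtain ⟨r, hr, q, rfl⟩ := D.exists_eq_natCast_add_mul g c
  rw [D.P_natCast_add_mul g hr.le] at ha ⊢
  rw [D.P_natCast_add_mul_succ g hr] at hb ⊢
  refine le_csSup ⟨b - a, ?_⟩ ⟨g, r, ⟨hr, q, ha, hb⟩, by ring⟩
  rintro _ ⟨_, _, ⟨-, q', ha', hb'⟩, rfl⟩
  linarith

lemma exists_P_of_containedIn {n j : ℕ} {a b : ℝ} (h : ContainedIn D n j a b) :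
    ∃ k, a ≤ D.P n k ∧ D.P n (k + 1) ≤ b ∧
      D.P n (k + 1) - D.P n k = D.p n (j + 1) - D.p n j := by
  obtain ⟨hj, q, ha, hb⟩ := h
  refine ⟨j + D.N n * q, ?_, ?_, ?_⟩ <;>
    simp only [D.P_natCast_add_mul n hj.le, D.P_natCast_add_mul_succ n hj] <;> linarith

namespace DeltaLe

variable {D} {a b L : ℝ}

lemma sub_P_le (hδ : D.DeltaLe a b L) {n : ℕ} {k : ℤ} (ha : a ≤ D.P n k) (hb : D.P n k < b)
    (hb' : b ≤ D.P n (k + 1)) : b - D.P n k ≤ 4 * L := by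
  obtain ⟨j, hj⟩ := pow_unbounded_of_one_lt ((D.P n (k + 1) - D.P n k) / (b - D.P n k))
    (by norm_num : (1 : ℝ) < 4)
  rw [div_lt_iff₀ (by linarith)] at hj
  induction j generalizing n k with
  | zero =>
    rw [pow_zero, one_mul] at hj
    linarith
  | succ j ih =>
    obtain ⟨c, K, h⟩ := D.exists_isChildren n k
    have hlen := h.len_first
    rcases le_or_gt (D.P (n + 1) (c + 1)) b with hc | hc
    · have := hδ _ _ (by rw [h.left]; exact ha) hc
      linarith
    · rw [← h.left] at ha hb ⊢
      refine ih ha hb hc.le ?_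
      rw [hlen, h.left, pow_succ] at *
      linarith

lemma P_sub_le (hδ : D.DeltaLe a b L) {n : ℕ} {k : ℤ} (ha : D.P n k ≤ a)
    (ha' : a < D.P n (k + 1)) (hb : D.P n (k + 1) ≤ b) : D.P n (k + 1) - a ≤ 4 * L := by
  obtain ⟨j, hj⟩ := pow_unbounded_of_one_lt ((D.P n (k + 1) - D.P n k) / (D.P n (k + 1) - a))
    (by norm_num : (1 : ℝ) < 4)
  rw [div_lt_iff₀ (by linarith)] at hj
  induction j generalizing n k with
  | zero =>
    rw [pow_zero, one_mul] at hj
    linarith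
  | succ j ih =>
    obtain ⟨c, K, h⟩ := D.exists_isChildren n k
    have hlen := h.len_last
    rcases le_or_gt a (D.P (n + 1) (c + K - 1)) with hc | hc
    · have := hδ _ _ hc (by rw [sub_add_cancel, h.right]; exact hb)
      rw [sub_add_cancel] at this
      linarith
    · rw [← h.right] at ha' hb ⊢
      rw [← sub_add_cancel (c + K) 1] at ha' hb ⊢
      refine ih hc.le ha' hb ?_
      rw [sub_add_cancel, hlen, h.right, pow_succ] at *
      linarith

/-- `[a, b]` splits into a final piece of child `l₀`, the children strictly between `l₀` and `l₁`,
and an initial piece of child `l₁`: `4 L + 16 L + 4 L`. -/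
lemma sub_le_of_isChildren (hδ : D.DeltaLe a b L) {n : ℕ} {k c : ℤ} {K : ℕ}
    (h : D.IsChildren n k c K) {l₀ l₁ : ℕ} (hl₀₁ : l₀ < l₁) (hl₁ : l₁ < K)
    (ha : D.P (n + 1) (c + l₀) ≤ a) (ha' : a < D.P (n + 1) (c + l₀ + 1))
    (hb : D.P (n + 1) (c + l₁) < b) (hb' : b ≤ D.P (n + 1) (c + l₁ + 1)) :
    b - a ≤ 24 * L := by
  have hmono := (D.P_strictMono (n + 1)).monotone
  have hw : D.P (n + 1) (c + l₀ + 1) ≤ D.P (n + 1) (c + l₁) := hmono (by omega)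
  have hleft := hδ.P_sub_le ha ha' (by linarith)
  have hright := hδ.sub_P_le (by linarith) hb hb'
  obtain ⟨m, rfl⟩ : ∃ m, l₁ = m + 1 := ⟨l₁ - 1, by omega⟩
  have hmiddle : D.P (n + 1) (c + (m + 1 : ℕ)) - D.P (n + 1) (c + l₀ + 1) ≤ 16 * L := by
    rcases (Nat.succ_le_of_lt hl₀₁).lt_or_eq with hlt | heq
    · have hspan := h.span_le (l₀ := l₀ + 1) (l₁ := m) (by omega) (by omega)
      have h₀ := hδ _ (c + (l₀ + 1 : ℕ)) (by push_cast [← add_assoc]; linarith)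
        (hmono (by push_cast; omega) |>.trans hb.le)
      have h₁ := hδ _ (c + m) (hmono (by omega) |>.trans' ha'.le)
        (by rw [show c + (m : ℤ) + 1 = c + (m + 1 : ℕ) by push_cast; ring]; exact hb.le)
      push_cast [← add_assoc] at hspan h₀ h₁ ⊢
      linarith
    · rw [show c + ((m + 1 : ℕ) : ℤ) = c + l₀ + 1 by rw [← heq]; push_cast; ring]
      linarith
  linarith

lemma sub_le_of_subset (hδ : D.DeltaLe a b L) (hab : a < b) {n : ℕ} {k : ℤ}
    (ha : D.P n k ≤ a) (hb : b ≤ D.P n (k + 1)) : b - a ≤ 24 * L := by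
  obtain ⟨j, hj⟩ := pow_unbounded_of_one_lt ((D.P n (k + 1) - D.P n k) / (b - a))
    (by norm_num : (1 : ℝ) < 4)
  rw [div_lt_iff₀ (by linarith)] at hj
  induction j generalizing n k with
  | zero =>
    rw [pow_zero, one_mul] at hj
    linarith
  | succ j ih =>
    obtain ⟨c, K, h⟩ := D.exists_isChildren n k
    obtain ⟨l₀, hl₀, ha₀, ha₀'⟩ := h.exists_le_lt ha (by linarith)
    obtain ⟨l₁, hl₁, hb₁, hb₁'⟩ := h.exists_lt_le (by linarith) hb
    have hmono := (D.P_strictMono (n + 1)).monotone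
    rcases lt_trichotomy l₀ l₁ with hlt | rfl | hgt
    · exact hδ.sub_le_of_isChildren h hlt hl₁ ha₀ ha₀' hb₁ hb₁'
    · refine ih ha₀ hb₁' ?_
      rw [pow_succ] at hj
      linarith [h.len_le_quarter hl₀]
    · have := hmono (show c + l₁ + 1 ≤ c + l₀ by omega)
      linarith

/-- Either the interval contains `[a, b]`, or it and one of its neighbours stick out of `[a, b]`
on opposite sides, each overlapping it by at most `4 L`. -/
lemma sub_le_of_overlap (hδ : D.DeltaLe a b L) (hab : a < b) {n : ℕ} {k : ℤ}
    (hα : D.P n k < b) (hρ : a < D.P n (k + 1)) (hlen : 8 * L < D.P n (k + 1) - D.P n k) :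
    b - a ≤ 24 * L := by
  obtain ⟨hadj, -⟩ := D.P_adjacent n k
  obtain ⟨-, hadj'⟩ := D.P_adjacent n (k - 1)
  rw [sub_add_cancel, show k - 1 + 2 = k + 1 by ring] at hadj'
  rcases le_or_gt (D.P n k) a with ha | ha <;> rcases le_or_gt b (D.P n (k + 1)) with hb | hb
  · exact hδ.sub_le_of_subset hab ha hb
  · have h₁ := hδ.P_sub_le ha hρ hb.le
    rcases le_or_gt (D.P n (k + 2)) b with hb' | hb'
    · have := hδ n (k + 1) (by linarith) (by rwa [add_assoc, one_add_one_eq_two])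
      rw [add_assoc, one_add_one_eq_two] at this
      linarith
    · have := hδ.sub_P_le hρ.le hb (by rw [add_assoc, one_add_one_eq_two]; exact hb'.le)
      linarith
  · have h₁ := hδ.sub_P_le ha.le hα hb
    rcases le_or_gt a (D.P n (k - 1)) with ha' | ha'
    · have := hδ n (k - 1) ha' (by rw [sub_add_cancel]; linarith)
      rw [sub_add_cancel] at this
      linarith
    · have := hδ.P_sub_le ha'.le (by rwa [sub_add_cancel]) (by rw [sub_add_cancel]; linarith)
      rw [sub_add_cancel] at this
      linarith
  · have := hδ n k ha.le hb.le
    linarith [D.P_lt_P_succ n k]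

end DeltaLe

variable {D} {a b : ℝ} {m n : ℕ} {κ μ : ℤ}

/-- The ancestor is at least `4⁴ = 256` times longer than `δ([a, b])`, while
`b - a ≤ 24 δ([a, b])` by `DeltaLe.sub_le_of_overlap`. -/
lemma exists_long_ancestor (hδ : D.DeltaLe a b (D.P m (κ + 1) - D.P m κ))
    (hJ₁ : a ≤ D.P m κ) (hJ₂ : D.P m (κ + 1) ≤ b) (hmn : n + 4 ≤ m) :
    ∃ ν, D.P n ν < b ∧ a < D.P n (ν + 1) ∧ 4 * (b - a) < D.P n (ν + 1) - D.P n ν := by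
  obtain ⟨d, rfl⟩ := Nat.exists_eq_add_of_le (le_of_add_le_left hmn)
  obtain ⟨ν, hν₁, hν₂, hν₃⟩ := D.exists_ancestor n d κ
  have hJ := D.P_lt_P_succ (n + d) κ
  have h256 : (256 : ℝ) ≤ 4 ^ d := by
    calc (256 : ℝ) = 4 ^ 4 := by norm_num
      _ ≤ 4 ^ d := pow_le_pow_right₀ (by norm_num) (by omega)
  have hA : 256 * (D.P (n + d) (κ + 1) - D.P (n + d) κ) ≤ D.P n (ν + 1) - D.P n ν :=
    (mul_le_mul_of_nonneg_right h256 (by linarith)).trans hν₃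
  have hab := hδ.sub_le_of_overlap (n := n) (k := ν) (by linarith) (by linarith) (by linarith)
    (by linarith)
  exact ⟨ν, by linarith, by linarith, by linarith⟩

lemma le_add_three_of_right (hδ : D.DeltaLe a b (D.P m (κ + 1) - D.P m κ))
    (hJ₁ : a ≤ D.P m κ) (hJ₂ : D.P m (κ + 1) ≤ b)
    (hI₁ : b ≤ D.P n μ) (hI₂ : D.P n (μ + 1) ≤ b + (b - a)) : m ≤ n + 3 := by
  by_contra! hmn
  obtain ⟨ν, hν₁, hν₂, hν₃⟩ := exists_long_ancestor hδ hJ₁ hJ₂ hmn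
  have hνμ : ν < μ := (D.P_strictMono n).lt_iff_lt.1 (by linarith)
  have := (D.P_strictMono n).monotone (show ν + 2 ≤ μ + 1 by omega)
  linarith [(D.P_adjacent n ν).1]

lemma le_add_three_of_left (hδ : D.DeltaLe a b (D.P m (κ + 1) - D.P m κ))
    (hJ₁ : a ≤ D.P m κ) (hJ₂ : D.P m (κ + 1) ≤ b)
    (hI₁ : a - (b - a) ≤ D.P n μ) (hI₂ : D.P n (μ + 1) ≤ a) : m ≤ n + 3 := by
  by_contra! hmn
  obtain ⟨ν, hν₁, hν₂, hν₃⟩ := exists_long_ancestor hδ hJ₁ hJ₂ hmn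
  have hμν : μ + 1 < ν + 1 := (D.P_strictMono n).lt_iff_lt.1 (by linarith)
  have := (D.P_strictMono n).monotone (show μ ≤ ν - 1 by omega)
  have hadj := (D.P_adjacent n (ν - 1)).2
  rw [sub_add_cancel, show ν - 1 + 2 = ν + 1 by ring] at hadj
  linarith

end DyadicSubdivisions

theorem order_estimate_general (D : DyadicSubdivisions) (x t : ℝ) (m j n i : ℕ)
    (hJ : ContainedIn D m j (x - t) x)
    (hJmax : D.p m (j + 1) - D.p m j = deltaMax D (x - t) x)
    (hI : ContainedIn D n i x (x + t))
    (hImax : D.p n (i + 1) - D.p n i = deltaMax D x (x + t)) :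
    |(m : ℤ) - (n : ℤ)| ≤ 4 := by
  obtain ⟨κ, hJ₁, hJ₂, hJlen⟩ := D.exists_P_of_containedIn hJ
  obtain ⟨μ, hI₁, hI₂, hIlen⟩ := D.exists_P_of_containedIn hI
  have hδJ := D.deltaLe_deltaMax (x - t) x
  have hδI := D.deltaLe_deltaMax x (x + t)
  rw [← hJmax, ← hJlen] at hδJ
  rw [← hImax, ← hIlen] at hδI
  have hmn := D.le_add_three_of_right hδJ hJ₁ hJ₂ hI₁ (by linarith)
  have hnm := D.le_add_three_of_left hδI hI₁ hI₂ (by linarith) hJ₂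
  rw [abs_le]
  omega

/-- If `Jᵐ ∈ 𝓘ᵐ` and `Iⁿ ∈ 𝓘ⁿ` are largest subdivision intervals contained in the two
adjacent intervals `[x−t, x]` and `[x, x+t]` of `S¹`, then `|m − n| ≤ 4`. -/
theorem order_estimate (D : DyadicSubdivisions) (x t : ℝ) (ht0 : 0 < t)
    (ht : t ≤ 1 / 2) (m j n i : ℕ)
    (hJ : ContainedIn D m j (x - t) x)
    (hJmax : D.p m (j + 1) - D.p m j = deltaMax D (x - t) x)
    (hI : ContainedIn D n i x (x + t))
    (hImax : D.p n (i + 1) - D.p n i = deltaMax D x (x + t)) :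
    |(m : ℤ) - (n : ℤ)| ≤ 4 :=
  order_estimate_general D x t m j n i hJ hJmax hI hImax
end
end

section
/- Let Γ be a 1-bounded turning metric Jordan curve with nested arc subdivisions 𝒢ⁿ (same-generation diameter ratios in [1/2,2], generation decay ratio in [1/16, 1/4]) and let 𝓘ⁿ be combinatorially equivalent nested interval subdivisions of S¹ (Iⁿ⁺¹ᵢ ⊆ Iⁿⱼ ⟺ Γⁿ⁺¹ᵢ ⊆ Γⁿⱼ). Let φ : S¹ → Γ be the map sending endpoints of Iⁿⱼ to corresponding endpoints of Γⁿⱼ, extended by continuity. Then φ is a well-defined homeomorphism of S¹ onto Γ. -/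
open Metric Set

noncomputable section

/-- The arc of `Γ` corresponding to the parameter interval `[u, v] ⊆ [0,1]`. -/
def garc {Γ : Type*} [MetricSpace Γ] (e : S1 ≃ₜ Γ) (u v : ℝ) : Set Γ :=
  e '' ((fun t : ℝ => (t : S1)) '' Set.Icc u v)

/-!
Combinatorial equivalence of consecutive generations, propagated along the nesting, shows that
the subdivision points of all generations are in the same relative order in both families:
`p n i ≤ p m j ↔ q n i ≤ q m j`. Hence `t ↦ sup {q n j | p n j ≤ t}` is a strictly increasing
self-map of `[0, 1]` sending each `p n j` to `q n j`; it is continuous because its values contain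
the dense set of the `q n j`, and it fixes `0` and `1`, so it descends to a homeomorphism of the
circle. Composing with the parametrization `e` of `Γ` gives `φ`.
-/

structure IsSubdivision (N : ℕ) (a : ℕ → ℝ) : Prop where
  zero : a 0 = 0
  last : a N = 1
  lt_succ : ∀ i < N, a i < a (i + 1)

namespace IsSubdivision

variable {N : ℕ} {a : ℕ → ℝ}

theorem strictMonoOn (h : IsSubdivision N a) : StrictMonoOn a (Iic N) :=
  strictMonoOn_Iic_of_lt_succ fun i hi => by simpa using h.lt_succ i hi

theorem le_iff_le (h : IsSubdivision N a) {i j : ℕ} (hi : i ≤ N) (hj : j ≤ N) :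
    a i ≤ a j ↔ i ≤ j :=
  h.strictMonoOn.le_iff_le hi hj

theorem lt_iff_lt (h : IsSubdivision N a) {i j : ℕ} (hi : i ≤ N) (hj : j ≤ N) :
    a i < a j ↔ i < j :=
  h.strictMonoOn.lt_iff_lt hi hj

theorem eq_zero_iff (h : IsSubdivision N a) {i : ℕ} (hi : i ≤ N) : a i = 0 ↔ i = 0 := by
  rw [← h.zero]
  exact h.strictMonoOn.injOn.eq_iff hi (Nat.zero_le N)

theorem eq_one_iff (h : IsSubdivision N a) {i : ℕ} (hi : i ≤ N) : a i = 1 ↔ i = N := by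
  rw [← h.last]
  exact h.strictMonoOn.injOn.eq_iff hi self_mem_Iic

theorem mem_Icc (h : IsSubdivision N a) {i : ℕ} (hi : i ≤ N) : a i ∈ Icc 0 1 :=
  ⟨h.zero ▸ (h.le_iff_le (Nat.zero_le N) hi).2 (Nat.zero_le i),
    h.last ▸ (h.le_iff_le hi le_rfl).2 hi⟩

end IsSubdivision

def SameCombinatorics (N M : ℕ) (p p' q q' : ℕ → ℝ) : Prop :=
  ∀ i < M, ∀ j < N, Icc (p' i) (p' (i + 1)) ⊆ Icc (p j) (p (j + 1)) ↔
    Icc (q' i) (q' (i + 1)) ⊆ Icc (q j) (q (j + 1))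

section Refinement

variable {N M : ℕ} {p p' q q' : ℕ → ℝ}

theorem Icc_subset_Icc_of_left_eq (hp : IsSubdivision N p) (hp' : IsSubdivision M p')
    (hnest : ∀ i ≤ N, ∃ j ≤ M, p' j = p i) {k j : ℕ} (hk : k < M) (hj : j < N)
    (heq : p' k = p j) : Icc (p' k) (p' (k + 1)) ⊆ Icc (p j) (p (j + 1)) := by
  obtain ⟨m, hm, hpm⟩ := hnest (j + 1) hj
  have hkm : k < m := by
    rw [← hp'.lt_iff_lt hk.le hm, hpm, heq]
    exact hp.lt_succ j hj
  exact Icc_subset_Icc heq.ge (hpm ▸ (hp'.le_iff_le hk hm).2 hkm)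

theorem Icc_subset_Icc_of_right_eq (hp : IsSubdivision N p) (hp' : IsSubdivision M p')
    (hnest : ∀ i ≤ N, ∃ j ≤ M, p' j = p i) {k j : ℕ} (hk : k < M) (hj : j < N)
    (heq : p' (k + 1) = p (j + 1)) : Icc (p' k) (p' (k + 1)) ⊆ Icc (p j) (p (j + 1)) := by
  obtain ⟨m, hm, hpm⟩ := hnest j hj.le
  have hmk : m < k + 1 := by
    rw [← hp'.lt_iff_lt hm hk, hpm, heq]
    exact hp.lt_succ j hj
  exact Icc_subset_Icc (hpm ▸ (hp'.le_iff_le hm hk.le).2 (Nat.lt_succ_iff.1 hmk)) heq.le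

/-- The `p'`-intervals starting and ending at the shared point lie in the `p`-intervals starting
and ending there; transported to `q`, these inclusions pin `q' k` to `q j` from both sides. -/
theorem SameCombinatorics.eq_of_eq (hcomb : SameCombinatorics N M p p' q q')
    (hp : IsSubdivision N p) (hp' : IsSubdivision M p') (hq : IsSubdivision N q)
    (hq' : IsSubdivision M q') (hnest : ∀ i ≤ N, ∃ j ≤ M, p' j = p i) {k j : ℕ}
    (hk : k ≤ M) (hj : j ≤ N) (heq : p' k = p j) : q' k = q j := by
  have hk0 : k = 0 ↔ j = 0 := by rw [← hp'.eq_zero_iff hk, ← hp.eq_zero_iff hj, heq]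
  have hkM : k = M ↔ j = N := by rw [← hp'.eq_one_iff hk, ← hp.eq_one_iff hj, heq]
  apply le_antisymm
  · rcases j with _ | j
    · rw [hk0.2 rfl, hq'.zero, hq.zero]
    obtain ⟨k, rfl⟩ := Nat.exists_eq_succ_of_ne_zero (mt hk0.1 j.succ_ne_zero)
    have hsub := (hcomb k hk j hj).1 (Icc_subset_Icc_of_right_eq hp hp' hnest hk hj heq)
    exact (hsub (right_mem_Icc.2 (hq'.lt_succ k hk).le)).2
  · by_cases hjN : j = N
    · rw [hkM.2 hjN, hq'.last, hjN, hq.last]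
    have hkM' : k < M := lt_of_le_of_ne hk (mt hkM.1 hjN)
    have hjN' : j < N := lt_of_le_of_ne hj hjN
    have hsub := (hcomb k hkM' j hjN').1 (Icc_subset_Icc_of_left_eq hp hp' hnest hkM' hjN' heq)
    exact (hsub (left_mem_Icc.2 (hq'.lt_succ k hkM').le)).1

end Refinement

section Generations

variable {N : ℕ → ℕ} {p q : ℕ → ℕ → ℝ}

theorem exists_corresponding_index_of_le (hp : ∀ n, IsSubdivision (N n) (p n))
    (hq : ∀ n, IsSubdivision (N n) (q n))
    (hnest : ∀ n, ∀ i ≤ N n, ∃ j ≤ N (n + 1), p (n + 1) j = p n i)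
    (hcomb : ∀ n, SameCombinatorics (N n) (N (n + 1)) (p n) (p (n + 1)) (q n) (q (n + 1)))
    {n i : ℕ} (hi : i ≤ N n) {m : ℕ} (hnm : n ≤ m) :
    ∃ j ≤ N m, p m j = p n i ∧ q m j = q n i := by
  induction m, hnm using Nat.le_induction with
  | base => exact ⟨i, hi, rfl, rfl⟩
  | succ m _ ih =>
    obtain ⟨j, hj, hpj, hqj⟩ := ih
    obtain ⟨k, hk, hpk⟩ := hnest m j hj
    exact ⟨k, hk, hpk.trans hpj,
      ((hcomb m).eq_of_eq (hp m) (hp (m + 1)) (hq m) (hq (m + 1)) (hnest m) hk hj hpk).trans hqj⟩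

theorem le_iff_le_of_sameCombinatorics (hp : ∀ n, IsSubdivision (N n) (p n))
    (hq : ∀ n, IsSubdivision (N n) (q n))
    (hnest : ∀ n, ∀ i ≤ N n, ∃ j ≤ N (n + 1), p (n + 1) j = p n i)
    (hcomb : ∀ n, SameCombinatorics (N n) (N (n + 1)) (p n) (p (n + 1)) (q n) (q (n + 1)))
    {n m i j : ℕ} (hi : i ≤ N n) (hj : j ≤ N m) : p n i ≤ p m j ↔ q n i ≤ q m j := by
  obtain ⟨i', hi', hpi, hqi⟩ :=
    exists_corresponding_index_of_le hp hq hnest hcomb hi (le_max_left n m)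
  obtain ⟨j', hj', hpj, hqj⟩ :=
    exists_corresponding_index_of_le hp hq hnest hcomb hj (le_max_right n m)
  rw [← hpi, ← hpj, ← hqi, ← hqj, (hp _).le_iff_le hi' hj', (hq _).le_iff_le hi' hj']

end Generations

theorem eq_of_coe_eq_coe {t u : ℝ} (ht : t ∈ Ioo 0 1) (hu : u ∈ Icc 0 1)
    (h : (t : S1) = u) : t = u := by
  have ht' : t ∈ Ico 0 (0 + 1) := by simpa using Ioo_subset_Ico_self ht
  rcases hu.2.lt_or_eq with hu1 | rfl
  · exact (AddCircle.coe_eq_coe_iff_of_mem_Ico ht' (by simpa using And.intro hu.1 hu1)).1 h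
  · rw [AddCircle.coe_period] at h
    exact absurd ((AddCircle.coe_eq_zero_iff_of_mem_Ico (Ioo_subset_Ico_self ht)).1 h) ht.1.ne'

theorem exists_mem_Ioo_of_dense {ι : Type*} {r : ι → ℝ} (hr : ∀ i, r i ∈ Icc 0 1)
    (hdense : Dense (range fun i => (r i : S1))) {x y : ℝ} (hx : 0 ≤ x) (hxy : x < y)
    (hy : y ≤ 1) : ∃ i, r i ∈ Ioo x y := by
  obtain ⟨_, ⟨i, rfl⟩, t, ht, hti⟩ := hdense.exists_mem_open
    (QuotientAddGroup.isOpenMap_coe _ isOpen_Ioo) ((nonempty_Ioo.2 hxy).image _)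
  exact ⟨i, eq_of_coe_eq_coe ⟨hx.trans_lt ht.1, ht.2.trans_le hy⟩ (hr i) hti ▸ ht⟩

section Extension

variable {ι : Type*} {a b : ι → ℝ}

def supExtension (a b : ι → ℝ) (t : ℝ) : ℝ := sSup (b '' {i | a i ≤ t})

theorem bddAbove_image_of_mem_Icc (hb : ∀ i, b i ∈ Icc 0 1) (s : Set ι) : BddAbove (b '' s) :=
  bddAbove_Icc.mono (image_subset_iff.2 fun i _ => mem_preimage.2 (hb i))

theorem supExtension_mem_Icc (hb : ∀ i, b i ∈ Icc 0 1) (t : ℝ) :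
    supExtension a b t ∈ Icc 0 1 := by
  rcases (b '' {i | a i ≤ t}).eq_empty_or_nonempty with h | ⟨_, i, hi, rfl⟩
  · simp [supExtension, h]
  · exact ⟨le_csSup_of_le (bddAbove_image_of_mem_Icc hb _) ⟨i, hi, rfl⟩ (hb i).1,
      csSup_le ⟨b i, i, hi, rfl⟩ fun _ ⟨j, _, hj⟩ => hj ▸ (hb j).2⟩

theorem supExtension_monotone (hb : ∀ i, b i ∈ Icc 0 1) : Monotone (supExtension a b) := by
  intro s t hst
  rcases (b '' {i | a i ≤ s}).eq_empty_or_nonempty with h | h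
  · rw [supExtension, h, Real.sSup_empty]
    exact (supExtension_mem_Icc hb t).1
  · exact csSup_le_csSup (bddAbove_image_of_mem_Icc hb _) h
      (image_mono fun i (hi : a i ≤ s) => hi.trans hst)

theorem supExtension_apply (hb : ∀ i, b i ∈ Icc 0 1) (hab : ∀ i j, a i ≤ a j ↔ b i ≤ b j)
    (i : ι) : supExtension a b (a i) = b i :=
  le_antisymm (csSup_le ⟨b i, i, le_refl (a i), rfl⟩ fun _ ⟨j, hj, hbj⟩ => hbj ▸ (hab j i).1 hj)
    (le_csSup (bddAbove_image_of_mem_Icc hb _) ⟨i, le_refl (a i), rfl⟩)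

theorem supExtension_strictMonoOn (ha : ∀ i, a i ∈ Icc 0 1) (hb : ∀ i, b i ∈ Icc 0 1)
    (hab : ∀ i j, a i ≤ a j ↔ b i ≤ b j)
    (hadense : ∀ x y, 0 ≤ x → x < y → y ≤ 1 → ∃ i, a i ∈ Ioo x y) :
    StrictMonoOn (supExtension a b) (Icc 0 1) := by
  intro s hs t ht hst
  obtain ⟨i, hi⟩ := hadense s t hs.1 hst ht.2
  obtain ⟨j, hj⟩ := hadense (a i) t (ha i).1 hi.2 ht.2
  calc supExtension a b s ≤ supExtension a b (a i) := supExtension_monotone hb hi.1.le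
    _ = b i := supExtension_apply hb hab i
    _ < b j := lt_of_not_ge (mt (hab j i).2 (not_le.2 hj.1))
    _ = supExtension a b (a j) := (supExtension_apply hb hab j).symm
    _ ≤ supExtension a b t := supExtension_monotone hb hj.2.le

theorem supExtension_continuous (hb : ∀ i, b i ∈ Icc 0 1) (hab : ∀ i j, a i ≤ a j ↔ b i ≤ b j)
    (hbdense : ∀ x y, 0 ≤ x → x < y → y ≤ 1 → ∃ i, b i ∈ Ioo x y) :
    Continuous (supExtension a b) := by
  let g : ℝ → Icc (0 : ℝ) 1 := fun t => ⟨supExtension a b t, supExtension_mem_Icc hb t⟩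
  have hg : Monotone g := fun s t hst => supExtension_monotone hb hst
  have hdense : DenseRange g := dense_of_exists_between fun x y hxy => by
    obtain ⟨i, hi⟩ := hbdense x y x.2.1 hxy y.2.2
    refine ⟨g (a i), mem_range_self _, ?_⟩
    simpa [g, ← Subtype.coe_lt_coe, supExtension_apply hb hab] using hi
  exact continuous_subtype_val.comp (hg.continuous_of_denseRange hdense)

end Extension

theorem exists_homeomorph_circle_of_strictMonoOn {F : ℝ → ℝ} (hF : StrictMonoOn F (Icc 0 1))
    (hFc : ContinuousOn F (Icc 0 1)) (h0 : F 0 = 0) (h1 : F 1 = 1) :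
    ∃ ψ : S1 ≃ₜ S1, ∀ t ∈ Icc (0 : ℝ) 1, ψ t = F t := by
  let ψ := AddCircle.liftIco 1 0 fun t => (F t : S1)
  have hψ : ∀ t ∈ Ico (0 : ℝ) 1, ψ t = F t := fun t ht => AddCircle.liftIco_zero_coe_apply ht
  have hmaps : MapsTo F (Ico 0 1) (Ico 0 (0 + 1)) := fun t ht => by
    have ht' := Ico_subset_Icc_self ht
    rw [zero_add, ← h0, ← h1]
    exact ⟨hF.monotoneOn (left_mem_Icc.2 zero_le_one) ht' ht.1,
      hF ht' (right_mem_Icc.2 zero_le_one) ht.2⟩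
  have hinj : Function.Injective ψ := by
    intro x y hxy
    obtain ⟨s, hs, rfl⟩ := AddCircle.eq_coe_Ico x
    obtain ⟨t, ht, rfl⟩ := AddCircle.eq_coe_Ico y
    rw [hψ s hs, hψ t ht, AddCircle.coe_eq_coe_iff_of_mem_Ico (hmaps hs) (hmaps ht)] at hxy
    rw [hF.injOn (Ico_subset_Icc_self hs) (Ico_subset_Icc_self ht) hxy]
  have hsurj : Function.Surjective ψ := by
    intro y
    obtain ⟨u, hu, rfl⟩ := AddCircle.eq_coe_Ico y
    obtain ⟨t, ht, rfl⟩ := intermediate_value_Icc zero_le_one hFc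
      (by rw [h0, h1]; exact Ico_subset_Icc_self hu)
    have ht1 : t < 1 := lt_of_le_of_ne ht.2 (by rintro rfl; exact hu.2.ne h1)
    exact ⟨t, hψ t ⟨ht.1, ht1⟩⟩
  have hψc : Continuous ψ :=
    AddCircle.liftIco_zero_continuous (by simp [h0, h1, AddCircle.coe_period])
      ((AddCircle.continuous_mk' 1).comp_continuousOn hFc)
  refine ⟨hψc.homeoOfEquivCompactToT2 (f := Equiv.ofBijective ψ ⟨hinj, hsurj⟩), fun t ht => ?_⟩
  rcases ht.2.lt_or_eq with ht1 | rfl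
  · exact hψ t ⟨ht.1, ht1⟩
  · show ψ _ = _
    simpa [h0, h1, AddCircle.coe_period] using hψ 0 (left_mem_Ico.2 zero_lt_one)

theorem exists_homeomorph_circle_of_le_iff_le {ι : Type*} {a b : ι → ℝ}
    (ha : ∀ i, a i ∈ Icc 0 1) (hb : ∀ i, b i ∈ Icc 0 1) (hab : ∀ i j, a i ≤ a j ↔ b i ≤ b j)
    (h0 : ∃ i, a i = 0 ∧ b i = 0) (h1 : ∃ i, a i = 1 ∧ b i = 1)
    (hadense : Dense (range fun i => (a i : S1))) (hbdense : Dense (range fun i => (b i : S1))) :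
    ∃ ψ : S1 ≃ₜ S1, ∀ i, ψ (a i) = b i := by
  obtain ⟨i₀, ha₀, hb₀⟩ := h0
  obtain ⟨i₁, ha₁, hb₁⟩ := h1
  obtain ⟨ψ, hψ⟩ := exists_homeomorph_circle_of_strictMonoOn
    (supExtension_strictMonoOn ha hb hab fun _ _ => exists_mem_Ioo_of_dense ha hadense)
    (supExtension_continuous hb hab fun _ _ => exists_mem_Ioo_of_dense hb hbdense).continuousOn
    (by simpa [ha₀, hb₀] using supExtension_apply hb hab i₀)
    (by simpa [ha₁, hb₁] using supExtension_apply hb hab i₁)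
  exact ⟨ψ, fun i => by rw [hψ _ (ha i), supExtension_apply hb hab]⟩

theorem exists_endpoint_homeomorph_general
    {Γ : Type*} [MetricSpace Γ] (e : S1 ≃ₜ Γ)
    (N : ℕ → ℕ) (p q : ℕ → ℕ → ℝ)
    (hp0 : ∀ n, p n 0 = 0) (hp1 : ∀ n, p n (N n) = 1)
    (hpm : ∀ n, ∀ i < N n, p n i < p n (i + 1))
    (hq0 : ∀ n, q n 0 = 0) (hq1 : ∀ n, q n (N n) = 1)
    (hqm : ∀ n, ∀ i < N n, q n i < q n (i + 1))
    (hpnest : ∀ n, ∀ i ≤ N n, ∃ j ≤ N (n + 1), p (n + 1) j = p n i)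
    -- the two families of subdivisions have the same combinatorics
    (hcomb : ∀ n, ∀ i < N (n + 1), ∀ j < N n,
      (Set.Icc (p (n + 1) i) (p (n + 1) (i + 1)) ⊆ Set.Icc (p n j) (p n (j + 1))) ↔
      (Set.Icc (q (n + 1) i) (q (n + 1) (i + 1)) ⊆ Set.Icc (q n j) (q n (j + 1))))
    -- the subdivision points are dense in `S¹` and in `Γ`
    (hpdense : Dense {s : S1 | ∃ n, ∃ j ≤ N n, s = ((p n j : ℝ) : S1)})
    (hqdense : Dense {x : Γ | ∃ n, ∃ j ≤ N n, x = e ((q n j : ℝ) : S1)}) :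
    ∃ φ : S1 ≃ₜ Γ, ∀ n, ∀ j ≤ N n, φ ((p n j : ℝ) : S1) = e ((q n j : ℝ) : S1) := by
  have hp n : IsSubdivision (N n) (p n) := ⟨hp0 n, hp1 n, hpm n⟩
  have hq n : IsSubdivision (N n) (q n) := ⟨hq0 n, hq1 n, hqm n⟩
  have hrange (r : ℕ → ℕ → ℝ) : range (fun x : {x : ℕ × ℕ // x.2 ≤ N x.1} =>
      (r x.1.1 x.1.2 : S1)) = {s : S1 | ∃ n, ∃ j ≤ N n, s = r n j} := by
    ext s
    constructor
    · rintro ⟨⟨⟨n, j⟩, hj⟩, rfl⟩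
      exact ⟨n, j, hj, rfl⟩
    · rintro ⟨n, j, hj, rfl⟩
      exact ⟨⟨(n, j), hj⟩, rfl⟩
  have hqdense' : Dense {s : S1 | ∃ n, ∃ j ≤ N n, s = q n j} := by
    convert hqdense.preimage e.isOpenMap using 1
    ext s
    simp [e.injective.eq_iff]
  obtain ⟨ψ, hψ⟩ := exists_homeomorph_circle_of_le_iff_le
    (a := fun x : {x : ℕ × ℕ // x.2 ≤ N x.1} => p x.1.1 x.1.2) (b := fun x => q x.1.1 x.1.2)
    (fun x => (hp _).mem_Icc x.2) (fun x => (hq _).mem_Icc x.2)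
    (fun x y => le_iff_le_of_sameCombinatorics hp hq hpnest hcomb x.2 y.2)
    ⟨⟨(0, 0), Nat.zero_le _⟩, hp0 0, hq0 0⟩ ⟨⟨(0, N 0), le_rfl⟩, hp1 0, hq1 0⟩
    ((hrange p).symm ▸ hpdense) ((hrange q).symm ▸ hqdense')
  exact ⟨ψ.trans e, fun n j hj => congrArg e (hψ ⟨(n, j), hj⟩)⟩

/-- Given combinatorially equivalent nested subdivisions `𝓘ⁿ` of `S¹` (with points
`p n j`) and `𝒢ⁿ` of a `1`-bounded turning Jordan curve `Γ` (arcs with endpoints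
`e (q n j)`, same-generation diameter ratios in `[1/2,2]`, generation decay in
`[1/16,1/4]`, dense endpoints), the map sending endpoints of `Iⁿⱼ` to the corresponding
endpoints of `Γⁿⱼ` extends to a homeomorphism `φ : S¹ → Γ`. -/
theorem exists_endpoint_homeomorph
    {Γ : Type*} [MetricSpace Γ] (e : S1 ≃ₜ Γ)
    (h1bt : ∀ x y : Γ, ddist e x y = dist x y)
    (N : ℕ → ℕ) (hN : ∀ n, 1 ≤ N n) (p q : ℕ → ℕ → ℝ)
    (hp0 : ∀ n, p n 0 = 0) (hp1 : ∀ n, p n (N n) = 1)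
    (hpm : ∀ n, ∀ i < N n, p n i < p n (i + 1))
    (hq0 : ∀ n, q n 0 = 0) (hq1 : ∀ n, q n (N n) = 1)
    (hqm : ∀ n, ∀ i < N n, q n i < q n (i + 1))
    (hpnest : ∀ n, ∀ i ≤ N n, ∃ j ≤ N (n + 1), p (n + 1) j = p n i)
    (hqnest : ∀ n, ∀ i ≤ N n, ∃ j ≤ N (n + 1), q (n + 1) j = q n i)
    -- the two families of subdivisions have the same combinatorics
    (hcomb : ∀ n, ∀ i < N (n + 1), ∀ j < N n,
      (Set.Icc (p (n + 1) i) (p (n + 1) (i + 1)) ⊆ Set.Icc (p n j) (p n (j + 1))) ↔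
      (Set.Icc (q (n + 1) i) (q (n + 1) (i + 1)) ⊆ Set.Icc (q n j) (q n (j + 1))))
    -- same-generation diameters of the arcs of `Γ` are comparable within `[1/2, 2]`
    (hratio : ∀ n, ∀ i < N n, ∀ j < N n,
      diam (garc e (q n i) (q n (i + 1))) ≤ 2 * diam (garc e (q n j) (q n (j + 1))))
    -- generation decay of arc diameters within `[1/16, 1/4]`
    (hdecay : ∀ n, ∀ i < N (n + 1), ∀ j < N n,
      (1 / 16) * diam (garc e (q n j) (q n (j + 1))) ≤
          diam (garc e (q (n + 1) i) (q (n + 1) (i + 1))) ∧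
        diam (garc e (q (n + 1) i) (q (n + 1) (i + 1))) ≤
          (1 / 4) * diam (garc e (q n j) (q n (j + 1))))
    -- the subdivision points are dense in `S¹` and in `Γ`
    (hpdense : Dense {s : S1 | ∃ n, ∃ j ≤ N n, s = ((p n j : ℝ) : S1)})
    (hqdense : Dense {x : Γ | ∃ n, ∃ j ≤ N n, x = e ((q n j : ℝ) : S1)}) :
    ∃ φ : S1 ≃ₜ Γ, ∀ n, ∀ j ≤ N n, φ ((p n j : ℝ) : S1) = e ((q n j : ℝ) : S1) :=
  exists_endpoint_homeomorph_general e N p q hp0 hp1 hpm hq0 hq1 hqm hpnest hcomb hpdense hqdense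
end
end
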